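/- arXiv:1807.07397 — 8 statements merged into one kernel-verified Lean document; each statement's English description precedes it below -/
import Mathlib

section
/- The cosine matrix of type II of size n is orthogonal, i.e., C_n^II (C_n^II)^T = I_n. -/
/-!
Write `S(m) = ∑_{l<n} cos((2l+1) m π / (2n))`. The product-to-sum formula turns the inner
product of rows `k` and `j` of `C_n^II` into `(S(k-j) + S(k+j)) / 2`, up to the factors
`ε_n(k) ε_n(j) · 2/n`. Telescoping `2 sin θ cos((2l+1)θ) = sin((2l+2)θ) - sin(2lθ)` gives
`2 sin θ · S(m) = sin(mπ) = 0` for `θ = mπ/(2n)`, so `S(m) = 0` whenever `2n ∤ m`, while `S(0) = n`.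
Since `0 ≤ k, j < n`, only `S(0)` survives, once for `k = j ≠ 0` and twice for `k = j = 0`,
which is exactly what the normalization `ε_n(0) = 1/√2` compensates.
-/

open Matrix

/-- The cosine matrix of type II of size `n`. -/
noncomputable def CII (n : ℕ) : Matrix (Fin n) (Fin n) ℝ :=
  Matrix.of fun k l : Fin n =>
    Real.sqrt (2 / (n : ℝ)) * (if (k : ℕ) % n = 0 then 1 / Real.sqrt 2 else 1) *
      Real.cos ((k : ℕ) * (2 * (l : ℕ) + 1) * Real.pi / (2 * (n : ℝ)))

/-- The cosine matrix of type IV of size `n`. -/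
noncomputable def CIV (n : ℕ) : Matrix (Fin n) (Fin n) ℝ :=
  Matrix.of fun k l : Fin n =>
    Real.sqrt (2 / (n : ℝ)) *
      Real.cos ((2 * (k : ℕ) + 1) * (2 * (l : ℕ) + 1) * Real.pi / (4 * (n : ℝ)))

open Real Finset

theorem two_mul_sin_mul_sum_range_cos_odd_mul (θ : ℝ) (n : ℕ) :
    2 * sin θ * ∑ l ∈ range n, cos ((2 * l + 1) * θ) = sin (2 * n * θ) := by
  have telescope (l : ℕ) :
      2 * sin θ * cos ((2 * l + 1) * θ) = sin (2 * (l + 1 : ℕ) * θ) - sin (2 * l * θ) := by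
    rw [two_mul_sin_mul_cos, show θ - (2 * l + 1) * θ = -(2 * l * θ) by ring, sin_neg]
    push_cast
    ring_nf
  rw [mul_sum, sum_congr rfl fun l _ => telescope l, sum_range_sub (fun l => sin (2 * l * θ))]
  simp

theorem sum_range_cos_odd_mul_int_mul_pi_div_eq_zero {n : ℕ} {m : ℤ} (hm : ¬ (2 * n : ℤ) ∣ m) :
    ∑ l ∈ range n, cos ((2 * l + 1) * (m * π / (2 * n))) = 0 := by
  obtain rfl | hn := eq_or_ne n 0
  · simp
  have hsin : sin (m * π / (2 * n)) ≠ 0 := by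
    refine sin_ne_zero_iff.2 fun t ht => hm ⟨t, ?_⟩
    field_simp at ht
    exact_mod_cast (by linear_combination -ht : (m : ℝ) = 2 * n * t)
  have hsum := two_mul_sin_mul_sum_range_cos_odd_mul (m * π / (2 * n)) n
  rw [show 2 * (n : ℝ) * (m * π / (2 * n)) = m * π by field_simp, sin_int_mul_pi] at hsum
  exact (mul_eq_zero.1 hsum).resolve_left (mul_ne_zero two_ne_zero hsin)

theorem sum_range_cos_mul_cos {n k j : ℕ} (hk : k < n) (hj : j < n) :
    ∑ l ∈ range n, cos (k * (2 * l + 1) * π / (2 * n)) * cos (j * (2 * l + 1) * π / (2 * n)) =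
      if k = j then (if k = 0 then (n : ℝ) else n / 2) else 0 := by
  set S : ℤ → ℝ := fun m => ∑ l ∈ range n, cos ((2 * l + 1) * (m * π / (2 * n))) with hS
  have hS0 : S 0 = n := by simp [hS]
  have hS_eq_zero {m : ℤ} (hm0 : m ≠ 0) (hm : |m| < 2 * n) : S m = 0 :=
    sum_range_cos_odd_mul_int_mul_pi_div_eq_zero fun hd => hm0 (Int.eq_zero_of_abs_lt_dvd hd hm)
  have hsplit : ∑ l ∈ range n, cos (k * (2 * l + 1) * π / (2 * n)) *
      cos (j * (2 * l + 1) * π / (2 * n)) = (S (k - j) + S (k + j)) / 2 := by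
    rw [hS, ← sum_add_distrib, sum_div]
    refine sum_congr rfl fun l _ => ?_
    rw [eq_div_iff two_ne_zero, mul_comm, ← mul_assoc, two_mul_cos_mul_cos]
    push_cast
    ring_nf
  rw [hsplit]
  split_ifs with hkj hk0
  · subst hkj hk0
    simp [hS0]
  · subst hkj
    rw [sub_self, hS0, hS_eq_zero (by omega) (by rw [abs_lt]; omega)]
    ring
  · rw [hS_eq_zero (by omega) (by rw [abs_lt]; omega), hS_eq_zero (by omega) (by rw [abs_lt]; omega)]
    ring

theorem CII_mul_transpose_apply {n : ℕ} (k j : Fin n) :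
    (CII n * (CII n)ᵀ) k j =
      2 / n * (if (k : ℕ) = 0 then 1 / √2 else 1) * (if (j : ℕ) = 0 then 1 / √2 else 1) *
        ∑ l ∈ range n, cos (k * (2 * l + 1) * π / (2 * n)) * cos (j * (2 * l + 1) * π / (2 * n)) := by
  have hsqrt : √(2 / n) * √(2 / n) = 2 / n := mul_self_sqrt (by positivity)
  simp only [mul_apply, transpose_apply, CII, of_apply, Nat.mod_eq_of_lt k.isLt,
    Nat.mod_eq_of_lt j.isLt, mul_sum]
  rw [Fin.sum_univ_eq_sum_range (fun l => √(2 / n) * (if (k : ℕ) = 0 then 1 / √2 else 1) *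
      cos (k * (2 * l + 1) * π / (2 * n)) *
      (√(2 / n) * (if (j : ℕ) = 0 then 1 / √2 else 1) * cos (j * (2 * l + 1) * π / (2 * n))))]
  refine sum_congr rfl fun l _ => ?_
  conv_rhs => rw [← hsqrt]
  ring

theorem CII_mul_transpose_general (n : ℕ) :
    CII n * (CII n)ᵀ = 1 := by
  ext k j
  rw [CII_mul_transpose_apply, sum_range_cos_mul_cos k.isLt j.isLt, one_apply]
  have hn : n ≠ 0 := k.pos.ne'
  obtain rfl | hkj := eq_or_ne k j
  · by_cases hk0 : (k : ℕ) = 0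
    · have hsqrt2 : 1 / √2 * (1 / √2) = (1 / 2 : ℝ) := by
        rw [div_mul_div_comm, mul_self_sqrt zero_le_two, one_mul]
      simp only [hk0, if_true]
      rw [mul_assoc (2 / (n : ℝ)), hsqrt2]
      field_simp
    · simp [hk0, hn]
  · simp [hkj, Fin.val_injective.ne hkj]

theorem CII_mul_transpose (n : ℕ) (hn : 0 < n) :
    CII n * (CII n)ᵀ = 1 :=
  CII_mul_transpose_general n
end

section
/- For even n, the cosine matrix of type II factorizes as C_n^II = P_n^T · diag(C_{n/2}^II, C_{n/2}^IV) · T_n, where P_n is the even-odd permutation matrix and T_n = (1/√2) [[I_{n/2}, J_{n/2}], [I_{n/2}, -J_{n/2}]]. -/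
open Matrix

/-- The even-odd permutation matrix `P_n` for `n = 2c`. -/
def Pmat (c : ℕ) : Matrix (Fin (2 * c)) (Fin (2 * c)) ℝ :=
  Matrix.of fun k l : Fin (2 * c) =>
    if (k : ℕ) < c then (if (l : ℕ) = 2 * (k : ℕ) then 1 else 0)
    else (if (l : ℕ) = 2 * ((k : ℕ) - c) + 1 then 1 else 0)

/-- Block diagonal matrix `diag(A, B)` of size `2c`. -/
noncomputable def blockDiag (c : ℕ) (A B : Matrix (Fin c) (Fin c) ℝ) :
    Matrix (Fin (2 * c)) (Fin (2 * c)) ℝ :=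
  Matrix.of fun k l : Fin (2 * c) =>
    if hk : (k : ℕ) < c then
      if hl : (l : ℕ) < c then A ⟨(k : ℕ), hk⟩ ⟨(l : ℕ), hl⟩ else 0
    else
      if hl : (l : ℕ) < c then 0
      else B ⟨(k : ℕ) - c, by have := k.isLt; omega⟩ ⟨(l : ℕ) - c, by have := l.isLt; omega⟩

/-- The matrix `T_n = (1/√2) [[I, J], [I, -J]]` for `n = 2c`. -/
noncomputable def Tmat (c : ℕ) : Matrix (Fin (2 * c)) (Fin (2 * c)) ℝ :=
  Matrix.of fun k l : Fin (2 * c) =>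
    (1 / Real.sqrt 2) *
      (if (k : ℕ) < c then
        (if (l : ℕ) < c then (if (k : ℕ) = (l : ℕ) then 1 else 0)
         else (if (k : ℕ) + (l : ℕ) = 2 * c - 1 then 1 else 0))
       else
        (if (l : ℕ) < c then (if (k : ℕ) = (l : ℕ) + c then 1 else 0)
         else (if (k : ℕ) + (l : ℕ) = 3 * c - 1 then -1 else 0)))

/-!
Since `cos (k (2 (2c - 1 - l) + 1) π / 4c) = (-1)^k cos (k (2l + 1) π / 4c)`, the columns `l` and
`2c - 1 - l` of `C_{2c}^II` agree up to the sign `(-1)^k` in row `k`. Restricted to the first `c`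
columns, the even rows `2a` are the rows of `C_c^II` and the odd rows `2b + 1` those of `C_c^IV`,
both scaled by `1/√2`. So `P^T` sorts the rows by parity and `T` forms the sums and differences
of the column pairs.
-/

open Real

section Permutation

variable {c : ℕ} {n : Type*}

lemma Pmat_apply_eq_ite_of_val_eq_two_mul {k : Fin (2 * c)} {a : ℕ} (hk : (k : ℕ) = 2 * a)
    (i : Fin (2 * c)) : Pmat c i k = if i = ⟨a, by omega⟩ then 1 else 0 := by
  simp only [Pmat, of_apply, Fin.ext_iff]
  split_ifs <;> first | rfl | omega

lemma Pmat_apply_eq_ite_of_val_eq_two_mul_add_one {k : Fin (2 * c)} {b : ℕ}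
    (hk : (k : ℕ) = 2 * b + 1) (i : Fin (2 * c)) :
    Pmat c i k = if i = ⟨b + c, by omega⟩ then 1 else 0 := by
  simp only [Pmat, of_apply, Fin.ext_iff]
  split_ifs <;> first | rfl | omega

lemma transpose_Pmat_mul_apply_of_val_eq_two_mul (M : Matrix (Fin (2 * c)) n ℝ)
    {k : Fin (2 * c)} {a : ℕ} (hk : (k : ℕ) = 2 * a) (j : n) :
    ((Pmat c)ᵀ * M) k j = M ⟨a, by omega⟩ j := by
  simp [mul_apply, Pmat_apply_eq_ite_of_val_eq_two_mul hk]

lemma transpose_Pmat_mul_apply_of_val_eq_two_mul_add_one (M : Matrix (Fin (2 * c)) n ℝ)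
    {k : Fin (2 * c)} {b : ℕ} (hk : (k : ℕ) = 2 * b + 1) (j : n) :
    ((Pmat c)ᵀ * M) k j = M ⟨b + c, by omega⟩ j := by
  simp [mul_apply, Pmat_apply_eq_ite_of_val_eq_two_mul_add_one hk]

end Permutation

section Butterfly

variable {c : ℕ} {m : Type*}

lemma Tmat_apply_of_lt {l : Fin (2 * c)} (hl : (l : ℕ) < c) (j : Fin (2 * c)) :
    Tmat c j l = ((if j = l then 1 else 0) + (if j = ⟨l + c, by omega⟩ then 1 else 0)) / √2 := by
  simp only [Tmat, of_apply, Fin.ext_iff]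
  split_ifs <;> first | omega | ring

lemma Tmat_apply_of_le {l : Fin (2 * c)} (hl : c ≤ (l : ℕ)) (j : Fin (2 * c)) :
    Tmat c j l =
      ((if j = l.rev then 1 else 0) - (if j = ⟨l.rev + c, by rw [Fin.val_rev]; omega⟩ then 1 else 0)) / √2 := by
  simp only [Tmat, of_apply, Fin.ext_iff, Fin.val_rev]
  split_ifs <;> first | omega | ring

lemma mul_Tmat_apply_of_lt (M : Matrix m (Fin (2 * c)) ℝ) (i : m) {l : Fin (2 * c)}
    (hl : (l : ℕ) < c) : (M * Tmat c) i l = (M i l + M i ⟨l + c, by omega⟩) / √2 := by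
  simp only [mul_apply, Tmat_apply_of_lt hl, mul_div_assoc', mul_add, mul_ite, mul_one,
    mul_zero, ← Finset.sum_div, Finset.sum_add_distrib, Finset.sum_ite_eq', Finset.mem_univ,
    if_true]

lemma mul_Tmat_apply_of_le (M : Matrix m (Fin (2 * c)) ℝ) (i : m) {l : Fin (2 * c)}
    (hl : c ≤ (l : ℕ)) : (M * Tmat c) i l = (M i l.rev - M i ⟨l.rev + c, by rw [Fin.val_rev]; omega⟩) / √2 := by
  simp only [mul_apply, Tmat_apply_of_le hl, mul_div_assoc', mul_sub, mul_ite, mul_one,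
    mul_zero, ← Finset.sum_div, Finset.sum_sub_distrib, Finset.sum_ite_eq', Finset.mem_univ,
    if_true]

end Butterfly

section BlockDiag

variable {c : ℕ} (A B : Matrix (Fin c) (Fin c) ℝ) {i j : Fin (2 * c)}

lemma blockDiag_apply_of_lt_of_lt (hi : (i : ℕ) < c) (hj : (j : ℕ) < c) :
    blockDiag c A B i j = A ⟨i, hi⟩ ⟨j, hj⟩ := by
  simp [_root_.blockDiag, hi, hj]

lemma blockDiag_apply_of_lt_of_le (hi : (i : ℕ) < c) (hj : c ≤ (j : ℕ)) :
    blockDiag c A B i j = 0 := by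
  simp [_root_.blockDiag, hi, hj.not_gt]

lemma blockDiag_apply_of_le_of_lt (hi : c ≤ (i : ℕ)) (hj : (j : ℕ) < c) :
    blockDiag c A B i j = 0 := by
  simp [_root_.blockDiag, hi.not_gt, hj]

lemma blockDiag_apply_of_le_of_le (hi : c ≤ (i : ℕ)) (hj : c ≤ (j : ℕ)) :
    blockDiag c A B i j = B ⟨i - c, by omega⟩ ⟨j - c, by omega⟩ := by
  simp [_root_.blockDiag, hi.not_gt, hj.not_gt]

end BlockDiag

section Cosine

lemma CII_apply_rev {n : ℕ} (k l : Fin n) : CII n k l.rev = (-1) ^ (k : ℕ) * CII n k l := by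
  have hn : (n : ℝ) ≠ 0 := by have := l.pos; positivity
  have hrev : ((l.rev : ℕ) : ℝ) = n - 1 - l := by
    rw [Fin.val_rev, Nat.cast_sub l.isLt]; push_cast; ring
  have hangle : (k : ℕ) * (2 * ((l.rev : ℕ) : ℝ) + 1) * π / (2 * n) =
      (k : ℕ) * π - (k : ℕ) * (2 * (l : ℕ) + 1) * π / (2 * n) := by
    rw [hrev]; field_simp; ring
  simp only [CII, of_apply]
  rw [hangle, Real.cos_nat_mul_pi_sub]
  ring

lemma sqrt_two_div_two_mul (c : ℕ) : √(2 / ((2 * c : ℕ) : ℝ)) = √(2 / c) / √2 := by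
  rw [← Real.sqrt_div' _ zero_le_two]
  congr 1
  push_cast
  ring

lemma CII_two_mul_apply_of_val_eq_two_mul {c : ℕ} {k l : Fin (2 * c)} {a : ℕ}
    (hk : (k : ℕ) = 2 * a) (hl : (l : ℕ) < c) :
    CII (2 * c) k l = CII c ⟨a, by omega⟩ ⟨l, hl⟩ / √2 := by
  have hc : (c : ℝ) ≠ 0 := Nat.cast_ne_zero.mpr (by omega)
  have hmod : (k : ℕ) % (2 * c) = 0 ↔ a % c = 0 := by
    rw [Nat.mod_eq_of_lt k.isLt, Nat.mod_eq_of_lt (by omega : a < c)]; omega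
  have hangle : (k : ℕ) * (2 * (l : ℕ) + 1) * π / (2 * ((2 * c : ℕ) : ℝ)) =
      a * (2 * (l : ℕ) + 1) * π / (2 * c) := by
    push_cast [hk]; field_simp
  simp only [CII, of_apply, hmod, hangle, sqrt_two_div_two_mul]
  ring

lemma CII_two_mul_apply_of_val_eq_two_mul_add_one {c : ℕ} {k l : Fin (2 * c)} {b : ℕ}
    (hk : (k : ℕ) = 2 * b + 1) (hl : (l : ℕ) < c) :
    CII (2 * c) k l = CIV c ⟨b, by omega⟩ ⟨l, hl⟩ / √2 := by
  have hc : (c : ℝ) ≠ 0 := Nat.cast_ne_zero.mpr (by omega)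
  have hmod : (k : ℕ) % (2 * c) ≠ 0 := by rw [Nat.mod_eq_of_lt k.isLt]; omega
  have hangle : (k : ℕ) * (2 * (l : ℕ) + 1) * π / (2 * ((2 * c : ℕ) : ℝ)) =
      (2 * b + 1) * (2 * (l : ℕ) + 1) * π / (4 * c) := by
    push_cast [hk]; field_simp; ring
  simp only [CII, CIV, of_apply, hmod, hangle, sqrt_two_div_two_mul, if_false]
  ring

end Cosine

section Factorization

variable {c : ℕ} {k : Fin (2 * c)}

lemma CII_two_mul_apply_eq_of_val_eq_two_mul {a : ℕ} (hk : (k : ℕ) = 2 * a) (l : Fin (2 * c)) :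
    CII (2 * c) k l = ((Pmat c)ᵀ * blockDiag c (CII c) (CIV c) * Tmat c) k l := by
  have ha : a < c := by omega
  rcases lt_or_ge (l : ℕ) c with hl | hl
  · rw [mul_Tmat_apply_of_lt _ _ hl, transpose_Pmat_mul_apply_of_val_eq_two_mul _ hk,
      transpose_Pmat_mul_apply_of_val_eq_two_mul _ hk, blockDiag_apply_of_lt_of_lt _ _ ha hl,
      blockDiag_apply_of_lt_of_le _ _ ha (by simp), add_zero,
      CII_two_mul_apply_of_val_eq_two_mul hk hl]
  · have hrev : (l.rev : ℕ) < c := by rw [Fin.val_rev]; omega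
    have hsymm := CII_apply_rev k l.rev
    rw [Fin.rev_rev, hk, pow_mul, neg_one_sq, one_pow, one_mul] at hsymm
    rw [hsymm, mul_Tmat_apply_of_le _ _ hl, transpose_Pmat_mul_apply_of_val_eq_two_mul _ hk,
      transpose_Pmat_mul_apply_of_val_eq_two_mul _ hk, blockDiag_apply_of_lt_of_lt _ _ ha hrev,
      blockDiag_apply_of_lt_of_le _ _ ha (by simp), sub_zero,
      CII_two_mul_apply_of_val_eq_two_mul hk hrev]

lemma CII_two_mul_apply_eq_of_val_eq_two_mul_add_one {b : ℕ} (hk : (k : ℕ) = 2 * b + 1)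
    (l : Fin (2 * c)) :
    CII (2 * c) k l = ((Pmat c)ᵀ * blockDiag c (CII c) (CIV c) * Tmat c) k l := by
  have hb : c ≤ b + c := by omega
  rcases lt_or_ge (l : ℕ) c with hl | hl
  · rw [mul_Tmat_apply_of_lt _ _ hl, transpose_Pmat_mul_apply_of_val_eq_two_mul_add_one _ hk,
      transpose_Pmat_mul_apply_of_val_eq_two_mul_add_one _ hk,
      blockDiag_apply_of_le_of_lt _ _ hb hl, blockDiag_apply_of_le_of_le _ _ hb (by simp),
      zero_add, CII_two_mul_apply_of_val_eq_two_mul_add_one hk hl]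
    simp
  · have hrev : (l.rev : ℕ) < c := by rw [Fin.val_rev]; omega
    have hsymm := CII_apply_rev k l.rev
    rw [Fin.rev_rev, hk, pow_succ, pow_mul, neg_one_sq, one_pow, one_mul, neg_one_mul] at hsymm
    rw [hsymm, mul_Tmat_apply_of_le _ _ hl, transpose_Pmat_mul_apply_of_val_eq_two_mul_add_one _ hk,
      transpose_Pmat_mul_apply_of_val_eq_two_mul_add_one _ hk,
      blockDiag_apply_of_le_of_lt _ _ hb hrev, blockDiag_apply_of_le_of_le _ _ hb (by simp),
      zero_sub, CII_two_mul_apply_of_val_eq_two_mul_add_one hk hrev, neg_div]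
    simp

end Factorization

theorem CII_factorization_general (c : ℕ) :
    CII (2 * c) = (Pmat c)ᵀ * blockDiag c (CII c) (CIV c) * Tmat c := by
  ext k l
  obtain ⟨a, hk | hk⟩ := Nat.even_or_odd' k
  · exact CII_two_mul_apply_eq_of_val_eq_two_mul hk l
  · exact CII_two_mul_apply_eq_of_val_eq_two_mul_add_one hk l

theorem CII_factorization (c : ℕ) (hc : 0 < c) :
    CII (2 * c) = (Pmat c)ᵀ * blockDiag c (CII c) (CIV c) * Tmat c :=
  CII_factorization_general c
end

section
/- Let N = 2^J, x ∈ ℝ^N, and for 0 ≤ j ≤ J define the reflected periodization x^{(J)} := x and x^{(j)} := x^{(j+1)}_{(0)} + J_{2^j} x^{(j+1)}_{(1)}, where x^{(j+1)}_{(0)} and x^{(j+1)}_{(1)} denote the first and second half of x^{(j+1)}. Then the DCT-II of x^{(j)} satisfies (x^{(j)})^II_k = (√2)^{J-j} · x^II_{2^{J-j} k} for all 0 ≤ k ≤ 2^j - 1, where x^II = C_N^II x. -/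
open Matrix

/-- One step of reflected periodization: add the first half and the reflected second half. -/
noncomputable def halfSum (n : ℕ) (x : Fin (2 * n) → ℝ) : Fin n → ℝ :=
  fun k => x ⟨(k : ℕ), by have := k.isLt; omega⟩ +
           x ⟨2 * n - 1 - (k : ℕ), by have := k.isLt; omega⟩

/-- Iterated reflected periodization, peeling off `s` halving steps. -/
noncomputable def perAux (j : ℕ) : (s : ℕ) → (Fin (2 ^ (j + s)) → ℝ) → Fin (2 ^ j) → ℝ
  | 0, x => x
  | s + 1, x => perAux j s (halfSum (2 ^ (j + s))
      (fun k => x (Fin.cast (by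
        have h1 : j + (s + 1) = (j + s) + 1 := by omega
        rw [h1, pow_succ]; ring) k)))

/-- The reflected periodization `x^{(j)}` of `x ∈ ℝ^{2^J}`. -/
noncomputable def reflPer (J j : ℕ) (h : j ≤ J) (x : Fin (2 ^ J) → ℝ) : Fin (2 ^ j) → ℝ :=
  perAux j (J - j) (fun k => x (Fin.cast (by rw [Nat.add_sub_cancel' h]) k))

/-! The even rows of `C_{2n}^II` are symmetric under `l ↦ 2n - 1 - l` and agree, up to the factor
`1/√2`, with the rows of `C_n^II`: `√2 · C_{2n}[2k, l] = C_n[k, l]` for `l < n`. Hence one folding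
step `x ↦ x_{(0)} + J_n x_{(1)}` turns the DCT-II of size `n` of the folded vector into `√2` times
the even-indexed DCT-II coefficients of `x`, and iterating `J - j` times gives the theorem. -/

theorem Fin.sum_univ_two_mul_eq_sum_add_rev {M : Type*} [AddCommMonoid M] (n : ℕ)
    (f : Fin (2 * n) → M) :
    ∑ m, f m =
      ∑ l : Fin n, (f (Fin.castLE (by omega) l) + f (Fin.rev (Fin.castLE (by omega) l))) := by
  rw [← (finCongr (two_mul n).symm).sum_comp, Fin.sum_univ_add,
    ← Equiv.sum_comp Fin.revPerm fun i => f (finCongr (two_mul n).symm (Fin.natAdd n i)),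
    ← Finset.sum_add_distrib]
  refine Fintype.sum_congr _ _ fun l =>
    congrArg₂ _ (congrArg f (Fin.ext rfl)) (congrArg f (Fin.ext ?_))
  simp
  omega

theorem halfSum_apply (n : ℕ) (x : Fin (2 * n) → ℝ) (k : Fin n) :
    halfSum n x k = x (Fin.castLE (by omega) k) + x (Fin.rev (Fin.castLE (by omega) k)) := by
  simp only [halfSum]
  congr 2
  ext; simp; omega

theorem CII_apply_eq_sqrt_two_mul {n : ℕ} (hn : 0 < n) (k l : Fin n) :
    CII n k l = Real.sqrt 2 * CII (2 * n) ⟨2 * k, by omega⟩ (Fin.castLE (by omega) l) := by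
  have hn' : (0 : ℝ) < n := by exact_mod_cast hn
  have hk := k.isLt
  have hnorm : Real.sqrt (2 / (n : ℝ)) = Real.sqrt 2 * Real.sqrt (2 / ((2 * n : ℕ) : ℝ)) := by
    rw [← Real.sqrt_mul zero_le_two]
    congr 1
    push_cast
    field_simp
  have hzero : (k : ℕ) % n = 0 ↔ 2 * (k : ℕ) % (2 * n) = 0 := by
    rw [Nat.mod_eq_of_lt hk, Nat.mod_eq_of_lt (by omega)]
    omega
  have hangle : (k : ℝ) * (2 * l + 1) * Real.pi / (2 * n)
      = ((2 * k : ℕ) : ℝ) * (2 * l + 1) * Real.pi / (2 * (2 * n : ℕ)) := by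
    push_cast
    field_simp
  simp only [CII, Matrix.of_apply, Fin.val_castLE, hnorm, hzero, hangle]
  ring

theorem CII_two_mul_apply_rev (n k : ℕ) (hk : 2 * k < 2 * n) (l : Fin (2 * n)) :
    CII (2 * n) ⟨2 * k, hk⟩ l.rev = CII (2 * n) ⟨2 * k, hk⟩ l := by
  simp only [CII, Matrix.of_apply, Fin.val_rev]
  congr 1
  have hl : ((2 * n - (l + 1) : ℕ) : ℝ) = 2 * n - (l + 1) := by
    rw [Nat.cast_sub (by omega)]; push_cast; ring
  have hn : (0 : ℝ) < n := by have := l.isLt; exact_mod_cast (by omega : 0 < n)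
  rw [← Real.cos_nat_mul_two_pi_sub _ k, hl]
  congr 1
  push_cast
  field_simp
  ring

theorem CII_mulVec_halfSum {n : ℕ} (hn : 0 < n) (x : Fin (2 * n) → ℝ) (k : Fin n) :
    (CII n *ᵥ halfSum n x) k = Real.sqrt 2 * (CII (2 * n) *ᵥ x) ⟨2 * k, by omega⟩ := by
  simp only [mulVec, dotProduct]
  rw [Fin.sum_univ_two_mul_eq_sum_add_rev, Finset.mul_sum]
  refine Fintype.sum_congr _ _ fun l => ?_
  rw [halfSum_apply, CII_two_mul_apply_rev, CII_apply_eq_sqrt_two_mul hn]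
  ring

theorem CII_mulVec_cast {m m' : ℕ} (h : m = m') (x : Fin m' → ℝ) (i : Fin m) :
    (CII m *ᵥ fun i => x (Fin.cast h i)) i = (CII m' *ᵥ x) (Fin.cast h i) := by
  subst h
  rfl

theorem two_pow_mul_lt_two_pow_add {j k : ℕ} (s : ℕ) (hk : k < 2 ^ j) :
    2 ^ s * k < 2 ^ (j + s) := by
  rw [pow_add, mul_comm (2 ^ j)]
  exact Nat.mul_lt_mul_of_pos_left hk (by positivity)

theorem CII_mulVec_perAux (j s : ℕ) (x : Fin (2 ^ (j + s)) → ℝ) (k : Fin (2 ^ j)) :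
    (CII (2 ^ j) *ᵥ perAux j s x) k =
      Real.sqrt 2 ^ s *
        (CII (2 ^ (j + s)) *ᵥ x) ⟨2 ^ s * k, two_pow_mul_lt_two_pow_add s k.isLt⟩ := by
  induction s with
  | zero => simp [perAux]
  | succ s ih =>
    rw [perAux, ih, CII_mulVec_halfSum (by positivity), CII_mulVec_cast, pow_succ, mul_assoc]
    congr 3
    ext
    simp only [Fin.val_cast]
    ring

theorem dctII_reflPer (J j : ℕ) (h : j ≤ J) (x : Fin (2 ^ J) → ℝ) (k : Fin (2 ^ j)) :
    (CII (2 ^ j)).mulVec (reflPer J j h x) k =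
      (Real.sqrt 2) ^ (J - j) *
        (CII (2 ^ J)).mulVec x
          ⟨2 ^ (J - j) * (k : ℕ), by
            have hk := k.isLt
            have h0 : 0 < 2 ^ (J - j) := by positivity
            have hlt := mul_lt_mul_of_pos_left hk h0
            have hpow : 2 ^ (J - j) * 2 ^ j = 2 ^ J := by
              rw [← pow_add]; congr 1; omega
            exact lt_of_lt_of_eq hlt hpow⟩ := by
  rw [reflPer, CII_mulVec_perAux, CII_mulVec_cast]
  rfl
end

section
/- Let N = 2^J and let x ∈ ℝ^N have short support of length m, i.e., there exists μ with x_μ ≠ 0, x_{μ+m-1} ≠ 0 and x_k = 0 for k ∉ {μ, ..., μ+m-1}. Set K := ⌈log₂ m⌉ + 1. Then for every j with K ≤ j ≤ J, the reflected periodization x^{(j)} has short support of length m^{(j)} ≤ m. -/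
open Matrix

/-- `y` has short (one-block) support of length `m` with first support index `μ`. -/
structure ShortSupp {n : ℕ} (y : Fin n → ℝ) (m μ : ℕ) : Prop where
  pos : 1 ≤ m
  bdd : μ + m ≤ n
  first : ∀ k : Fin n, (k : ℕ) = μ → y k ≠ 0
  last : ∀ k : Fin n, (k : ℕ) = μ + m - 1 → y k ≠ 0
  outside : ∀ k : Fin n, ((k : ℕ) < μ ∨ μ + m ≤ (k : ℕ)) → y k = 0

/-- Non-cancellation condition: if `m` is even, the first and last support entries
do not sum to zero. -/
def NonCancel {n : ℕ} (y : Fin n → ℝ) (m μ : ℕ) : Prop :=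
  Even m → ∀ a b : Fin n, (a : ℕ) = μ → (b : ℕ) = μ + m - 1 → y a + y b ≠ 0

def PerInv (m : ℕ) {n : ℕ} (y : Fin n → ℝ) : Prop :=
  (∃ μ, ShortSupp y m μ ∧ NonCancel y m μ) ∨
  (∃ m'' μ'', m'' ≤ m ∧ ShortSupp y m'' μ'' ∧ μ'' + m'' ≤ m) ∨
  (∃ m'' μ'', m'' ≤ m ∧ ShortSupp y m'' μ'' ∧ n ≤ μ'' + m)


lemma halfSum_eq (ν : ℕ) (y : Fin (2*ν) → ℝ) (k : Fin ν) :
    halfSum ν y k = y ⟨(k : ℕ), by have := k.isLt; omega⟩ +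
      y ⟨2*ν - 1 - (k : ℕ), by have := k.isLt; omega⟩ := rfl

/-- copy case: if the support lies in the first half, `halfSum` agrees with `y`. -/
lemma halfSum_copy (ν m'' μ'' : ℕ) (y : Fin (2*ν) → ℝ) (hss : ShortSupp y m'' μ'')
    (hμ : μ'' + m'' ≤ ν) :
    ∀ k : Fin ν, ∀ h : (k : ℕ) < 2*ν, halfSum ν y k = y ⟨(k : ℕ), h⟩ := by
  intro k h
  rw [halfSum_eq]
  have h2 : y ⟨2*ν - 1 - (k : ℕ), by have := k.isLt; omega⟩ = 0 := by
    apply hss.outside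
    have := k.isLt
    simp only []
    omega
  rw [h2, add_zero]

lemma shortSupp_copy (ν m'' μ'' : ℕ) (y : Fin (2*ν) → ℝ) (hss : ShortSupp y m'' μ'')
    (hμ : μ'' + m'' ≤ ν) : ShortSupp (halfSum ν y) m'' μ'' := by
  refine ⟨hss.pos, hμ, ?_, ?_, ?_⟩
  · intro k hk
    rw [halfSum_copy ν m'' μ'' y hss hμ k (by have := k.isLt; omega)]
    exact hss.first _ hk
  · intro k hk
    rw [halfSum_copy ν m'' μ'' y hss hμ k (by have := k.isLt; omega)]
    exact hss.last _ hk
  · intro k hk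
    rw [halfSum_copy ν m'' μ'' y hss hμ k (by have := k.isLt; omega)]
    exact hss.outside _ hk

/-- reflect case: support in the second half. -/
lemma halfSum_reflect (ν m'' μ'' : ℕ) (y : Fin (2*ν) → ℝ) (hss : ShortSupp y m'' μ'')
    (hμ : ν ≤ μ'') :
    ∀ k : Fin ν, ∀ h : 2*ν - 1 - (k : ℕ) < 2*ν, halfSum ν y k = y ⟨2*ν - 1 - (k : ℕ), h⟩ := by
  intro k h
  rw [halfSum_eq]
  have h1 : y ⟨(k : ℕ), by have := k.isLt; omega⟩ = 0 := by
    apply hss.outside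
    have := k.isLt
    simp only []
    omega
  rw [h1, zero_add]

lemma shortSupp_reflect (ν m'' μ'' : ℕ) (y : Fin (2*ν) → ℝ) (hss : ShortSupp y m'' μ'')
    (hμ : ν ≤ μ'') : ShortSupp (halfSum ν y) m'' (2*ν - m'' - μ'') := by
  have hb := hss.bdd
  have hp := hss.pos
  refine ⟨hss.pos, by omega, ?_, ?_, ?_⟩
  · intro k hk
    rw [halfSum_reflect ν m'' μ'' y hss hμ k (by have := k.isLt; omega)]
    apply hss.last
    have := k.isLt
    simp only []
    omega
  · intro k hk
    rw [halfSum_reflect ν m'' μ'' y hss hμ k (by have := k.isLt; omega)]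
    apply hss.first
    have := k.isLt
    simp only []
    omega
  · intro k hk
    rw [halfSum_reflect ν m'' μ'' y hss hμ k (by have := k.isLt; omega)]
    apply hss.outside
    have := k.isLt
    simp only []
    omega

lemma exists_last {n : ℕ} (y : Fin n → ℝ) (a c : ℕ) (hc : c < n) (hac : a ≤ c)
    (ha : ∃ k : Fin n, (k : ℕ) = a ∧ y k ≠ 0)
    (hbig : ∀ k : Fin n, c < (k : ℕ) → y k = 0) :
    ∃ b, a ≤ b ∧ b ≤ c ∧ (∀ k : Fin n, (k : ℕ) = b → y k ≠ 0) ∧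
      (∀ k : Fin n, b < (k : ℕ) → y k = 0) := by
  classical
  set P : ℕ → Prop := fun t => ∀ k : Fin n, (k : ℕ) = t → y k ≠ 0 with hP
  have hPa : P a := by
    rintro k hk
    obtain ⟨k0, hk0, hk0y⟩ := ha
    have hkk : k = k0 := Fin.ext (by omega)
    rw [hkk]; exact hk0y
  refine ⟨Nat.findGreatest P c, Nat.le_findGreatest hac hPa, Nat.findGreatest_le c,
    Nat.findGreatest_spec hac hPa, ?_⟩
  intro k hk
  by_cases h : (k : ℕ) ≤ c
  · have hnp := Nat.findGreatest_is_greatest hk h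
    rw [hP] at hnp
    obtain ⟨k', hk', hk'0⟩ : ∃ k' : Fin n, (k' : ℕ) = (k : ℕ) ∧ y k' = 0 := by
      by_contra hcon; push_neg at hcon; exact hnp hcon
    have hkk : k = k' := Fin.ext (by omega)
    rw [hkk]; exact hk'0
  · exact hbig k (by omega)

lemma shortSupp_mk {n : ℕ} (y : Fin n → ℝ) (a c : ℕ) (hc : c < n) (hac : a ≤ c)
    (h0 : ∀ k : Fin n, (k : ℕ) < a → y k = 0)
    (ha : ∃ k : Fin n, (k : ℕ) = a ∧ y k ≠ 0)
    (hbig : ∀ k : Fin n, c < (k : ℕ) → y k = 0) :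
    ∃ m'', a + m'' ≤ c + 1 ∧ ShortSupp y m'' a := by
  obtain ⟨b, hab, hbc, hbne, hb0⟩ := exists_last y a c hc hac ha hbig
  refine ⟨b - a + 1, by omega, ?_⟩
  refine ⟨by omega, by omega, ?_, ?_, ?_⟩
  · intro k hk
    obtain ⟨k0, hk0, hk0y⟩ := ha
    have hkk : k = k0 := Fin.ext (by omega)
    rw [hkk]; exact hk0y
  · intro k hk; exact hbne k (by omega)
  · intro k hk
    rcases hk with hk | hk
    · exact h0 k hk
    · exact hb0 k (by omega)

lemma perInv_halfSum (m ν : ℕ) (hν : m ≤ ν) (y : Fin (2*ν) → ℝ) (hy : PerInv m y) :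
    PerInv m (halfSum ν y) := by
  rcases hy with ⟨μ, hss, hnc⟩ | ⟨m'', μ'', hm, hss, hend⟩ | ⟨m'', μ'', hm, hss, hend⟩
  · -- state A
    have hb := hss.bdd
    have hp := hss.pos
    by_cases h1 : μ + m ≤ ν
    · -- fully in first half: copy, stay A
      left
      refine ⟨μ, shortSupp_copy ν m μ y hss h1, ?_⟩
      intro he a b hav hbv
      rw [halfSum_copy ν m μ y hss h1 a (by have := a.isLt; omega),
          halfSum_copy ν m μ y hss h1 b (by have := b.isLt; omega)]
      exact hnc he _ _ hav hbv
    · by_cases h2 : ν ≤ μ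
      · -- fully in second half: reflect, stay A
        left
        refine ⟨2*ν - m - μ, shortSupp_reflect ν m μ y hss h2, ?_⟩
        intro he a b hav hbv
        rw [halfSum_reflect ν m μ y hss h2 a (by have := a.isLt; omega),
            halfSum_reflect ν m μ y hss h2 b (by have := b.isLt; omega),
            add_comm]
        apply hnc he
        · have := b.isLt; simp only []; omega
        · have := a.isLt; simp only []; omega
      · -- collision case
        push_neg at h1 h2
        set a := min μ (2*ν - m - μ) with ha
        have haν : a < ν := by omega
        have key : ∃ k : Fin ν, (k : ℕ) = a ∧ halfSum ν y k ≠ 0 := by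
          refine ⟨⟨a, haν⟩, rfl, ?_⟩
          rw [halfSum_eq]
          rcases lt_trichotomy μ (2*ν - m - μ) with hlt | heq | hgt
          · have hz : y ⟨2*ν - 1 - (a : ℕ), by omega⟩ = 0 := by
              apply hss.outside; simp only []; omega
            simp only [hz, add_zero]
            apply hss.first; simp only []; omega
          · have hev : Even m := ⟨ν - μ, by omega⟩
            apply hnc hev
            · simp only []; omega
            · simp only []; omega
          · have hz : y ⟨(a : ℕ), by omega⟩ = 0 := by
              apply hss.outside; simp only []; omega
            simp only [hz, zero_add]
            apply hss.last; simp only []; omega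
        have h0 : ∀ k : Fin ν, (k : ℕ) < a → halfSum ν y k = 0 := by
          intro k hk
          rw [halfSum_eq]
          have hz1 : y ⟨(k : ℕ), by have := k.isLt; omega⟩ = 0 := by
            apply hss.outside; simp only []; omega
          have hz2 : y ⟨2*ν - 1 - (k : ℕ), by have := k.isLt; omega⟩ = 0 := by
            apply hss.outside; simp only []; have := k.isLt; omega
          rw [hz1, hz2, add_zero]
        have hbig : ∀ k : Fin ν, ν - 1 < (k : ℕ) → halfSum ν y k = 0 := by
          intro k hk; exact absurd k.isLt (by omega)
        obtain ⟨m2, hm2, hss2⟩ := shortSupp_mk (halfSum ν y) a (ν - 1)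
          (by omega) (by omega) h0 key hbig
        right; right
        exact ⟨m2, a, by omega, hss2, by omega⟩
  · -- state B : support within [0, m-1]
    right; left
    have hb := hss.bdd
    exact ⟨m'', μ'', hm, shortSupp_copy ν m'' μ'' y hss (by omega), hend⟩
  · -- state C : support within [2ν-m, 2ν-1]
    right; left
    have hb := hss.bdd
    have hp := hss.pos
    have hμ : ν ≤ μ'' := by omega
    exact ⟨m'', 2*ν - m'' - μ'', hm, shortSupp_reflect ν m'' μ'' y hss hμ, by omega⟩


lemma perInv_cast {n n' : ℕ} (e : n' = n) (y : Fin n → ℝ) (m : ℕ) (hy : PerInv m y) :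
    PerInv m (fun k => y (Fin.cast e k)) := by
  subst e
  exact hy

lemma perAux_inv (m j : ℕ) (hj : m ≤ 2 ^ j) :
    ∀ s (y : Fin (2 ^ (j + s)) → ℝ), PerInv m y → PerInv m (perAux j s y) := by
  intro s
  induction s with
  | zero => intro y hy; exact hy
  | succ s ih =>
    intro y hy
    apply ih
    apply perInv_halfSum m (2 ^ (j + s))
      (le_trans hj (Nat.pow_le_pow_right (by norm_num) (by omega)))
    exact perInv_cast _ y m hy

theorem reflPer_shortSupport (J m μ : ℕ) (x : Fin (2 ^ J) → ℝ)
    (hs : ShortSupp x m μ) (hnc : NonCancel x m μ)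
    (j : ℕ) (hK : Nat.clog 2 m + 1 ≤ j) (hJ : j ≤ J) :
    ∃ (m' μ' : ℕ), m' ≤ m ∧ ShortSupp (reflPer J j hJ x) m' μ' := by
  have hm1 : 1 ≤ m := hs.pos
  have hj : m ≤ 2 ^ j := by
    calc m ≤ 2 ^ Nat.clog 2 m := Nat.le_pow_clog (by norm_num) m
    _ ≤ 2 ^ j := Nat.pow_le_pow_right (by norm_num) (by omega)
  have hinv : PerInv m (reflPer J j hJ x) := by
    apply perAux_inv m j hj
    apply perInv_cast
    exact Or.inl ⟨μ, hs, hnc⟩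
  rcases hinv with ⟨μ', hss, _⟩ | ⟨m', μ', hm', hss, _⟩ | ⟨m', μ', hm', hss, _⟩
  · exact ⟨m, μ', le_rfl, hss⟩
  · exact ⟨m', μ', hm', hss⟩
  · exact ⟨m', μ', hm', hss⟩
end

section
/- Let N = 2^J and x ∈ ℝ^N with short support of length m ≤ M, satisfying the non-cancellation condition. Set L := ⌈log₂ M⌉ + 1. Then there is at most one index j' ∈ {L, ..., J} such that the support of the reflected periodization x^{(j')} is contained in the last M entries, i.e., S^{(j')} ⊂ {2^{j'} − M, ..., 2^{j'} − 1}. -/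
open Matrix

/-!
Entry `k` of `x^{(j)}` is the sum of the `x_n` over the fibre of `reflIndex j` above `k`, and
`reflIndex j₁ ∘ reflIndex j₂ = reflIndex j₁` for `j₁ ≤ j₂`, so `x^{(j₁)}` is the reflected
periodization of `x^{(j₂)}`. Since `2^(j₁+1) ∣ 2^j₂`, `reflIndex j₁` maps the last `M` indices below
`2^j₂` onto the first `M` indices below `2^j₁`. Hence if both `x^{(j₁)}` and `x^{(j₂)}` were
supported in their last `M` entries, `x^{(j₁)}` would vanish, because `2 M ≤ 2^j₁`.

It cannot vanish: the support window has length `m ≤ 2^j₁`, so each fibre meets it in at most two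
points, symmetric about a reflection point. Either an endpoint of the window is alone in its fibre,
and `x_μ` or `x_{μ+m-1}` is an entry of `x^{(j₁)}`, or the two endpoints form one fibre, `m` is
even, and the entry is `x_μ + x_{μ+m-1} ≠ 0`.
-/

lemma Nat.ModEq.eq_of_lt_add {T a b : ℕ} (h : a ≡ b [MOD T]) (hab : a < b + T) (hba : b < a + T) :
    a = b :=
  h.eq_of_abs_lt (abs_lt.2 ⟨by omega, by omega⟩)

lemma eq_of_dvd_of_dvd {T u v : ℕ} (hu : T ∣ u) (hv : T ∣ v) (huv : u < v + T) (hvu : v < u + T) :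
    u = v :=
  ((Nat.modEq_zero_iff_dvd.2 hu).trans (Nat.modEq_zero_iff_dvd.2 hv).symm).eq_of_lt_add huv hvu

/-- `x^{(j)}_k` is the sum of the entries `x_n` with `reflIndex j n = k`. -/
def reflIndex (j n : ℕ) : ℕ :=
  min (n % 2 ^ (j + 1)) (2 ^ (j + 1) - 1 - n % 2 ^ (j + 1))

namespace reflIndex

lemma lt_two_pow (j n : ℕ) : reflIndex j n < 2 ^ j := by
  have hr : n % 2 ^ (j + 1) < 2 ^ (j + 1) := Nat.mod_lt _ (by positivity)
  have := pow_succ 2 j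
  unfold reflIndex
  omega

variable {j : ℕ}

lemma of_lt {n : ℕ} (h : n < 2 ^ j) : reflIndex j n = n := by
  have := pow_succ 2 j
  rw [reflIndex, Nat.mod_eq_of_lt (h.trans (Nat.pow_lt_pow_succ one_lt_two))]
  omega

lemma congr_mod {a b : ℕ} (h : a ≡ b [MOD 2 ^ (j + 1)]) : reflIndex j a = reflIndex j b := by
  rw [reflIndex, reflIndex, h]

lemma sub_one_sub {C n : ℕ} (hC : 2 ^ (j + 1) ∣ C) (hn : n < C) :
    reflIndex j (C - 1 - n) = reflIndex j n := by
  set T := 2 ^ (j + 1) with hT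
  have hr : n % T < T := Nat.mod_lt _ (by positivity)
  have hmod : (C - 1 - n) % T = T - 1 - n % T := by
    have : C - 1 - n + (n + 1) ≡ T - 1 - n % T + (n + 1) [MOD T] := by
      rw [show C - 1 - n + (n + 1) = C by omega,
        show T - 1 - n % T + (n + 1) = T * (n / T + 1) by
          have := Nat.div_add_mod n T; rw [mul_add]; omega]
      exact (Nat.modEq_zero_iff_dvd.2 hC).trans (Nat.modEq_zero_iff_dvd.2 (dvd_mul_right _ _)).symm
    rw [Nat.ModEq.add_right_cancel' _ this, Nat.mod_eq_of_lt (by omega)]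
  rw [reflIndex, reflIndex, ← hT, hmod]
  omega

lemma eq_of_dvd {a b : ℕ} (h : 2 ^ (j + 1) ∣ a + b + 1) : reflIndex j b = reflIndex j a := by
  simpa using sub_one_sub h (show a < a + b + 1 by omega)

lemma modEq_or_dvd {a b : ℕ} (h : reflIndex j a = reflIndex j b) :
    a ≡ b [MOD 2 ^ (j + 1)] ∨ 2 ^ (j + 1) ∣ a + b + 1 := by
  have ha : a % 2 ^ (j + 1) < 2 ^ (j + 1) := Nat.mod_lt _ (by positivity)
  have hb : b % 2 ^ (j + 1) < 2 ^ (j + 1) := Nat.mod_lt _ (by positivity)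
  unfold reflIndex at h
  rcases (show a % 2 ^ (j + 1) = b % 2 ^ (j + 1) ∨
      a % 2 ^ (j + 1) + b % 2 ^ (j + 1) + 1 = 2 ^ (j + 1) by omega) with h' | h'
  · exact Or.inl h'
  · have hsum : a + b + 1 ≡ a % 2 ^ (j + 1) + b % 2 ^ (j + 1) + 1 [MOD 2 ^ (j + 1)] :=
      ((Nat.mod_modEq a _).symm.add (Nat.mod_modEq b _).symm).add_right 1
    rw [h'] at hsum
    exact Or.inr (Nat.modEq_zero_iff_dvd.1 (hsum.trans (Nat.modEq_zero_iff_dvd.2 dvd_rfl)))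

lemma of_dvd_of_lt {C n : ℕ} (hC : 2 ^ (j + 1) ∣ C) (hn : n < C) (h : C - 1 - n < 2 ^ j) :
    reflIndex j n = C - 1 - n := by
  rw [← sub_one_sub hC hn, of_lt h]

end reflIndex

lemma reflIndex_reflIndex {j₁ j₂ : ℕ} (h : j₁ ≤ j₂) (n : ℕ) :
    reflIndex j₁ (reflIndex j₂ n) = reflIndex j₁ n := by
  have hdvd : 2 ^ (j₁ + 1) ∣ 2 ^ (j₂ + 1) := pow_dvd_pow 2 (by omega)
  have hmod : reflIndex j₁ (n % 2 ^ (j₂ + 1)) = reflIndex j₁ n :=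
    reflIndex.congr_mod (Nat.mod_mod_of_dvd n hdvd)
  have hr : n % 2 ^ (j₂ + 1) < 2 ^ (j₂ + 1) := Nat.mod_lt _ (by positivity)
  rcases min_choice (n % 2 ^ (j₂ + 1)) (2 ^ (j₂ + 1) - 1 - n % 2 ^ (j₂ + 1)) with h' | h'
  · rw [show reflIndex j₂ n = _ from h', hmod]
  · rw [show reflIndex j₂ n = _ from h', reflIndex.sub_one_sub hdvd hr, hmod]

noncomputable def extendByZero {α : Type*} [Zero α] {N : ℕ} (x : Fin N → α) (n : ℕ) : α :=
  if h : n < N then x ⟨n, h⟩ else 0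

section extendByZero

variable {α : Type*} [Zero α] {N : ℕ} (x : Fin N → α)

lemma extendByZero_of_lt {n : ℕ} (h : n < N) : extendByZero x n = x ⟨n, h⟩ := dif_pos h

lemma extendByZero_cast {N' : ℕ} (e : N' = N) :
    extendByZero (fun k : Fin N' => x (Fin.cast e k)) = extendByZero x := by
  subst e; rfl

end extendByZero

open Finset

lemma extendByZero_halfSum {N n : ℕ} (x : Fin (2 * N) → ℝ) (hn : n < N) :
    extendByZero (halfSum N x) n = extendByZero x n + extendByZero x (2 * N - 1 - n) := by
  rw [extendByZero_of_lt _ hn, extendByZero_of_lt _ (by omega), extendByZero_of_lt _ (by omega)]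
  rfl

lemma sum_filter_halfSum {N : ℕ} (x : Fin (2 * N) → ℝ) (p : ℕ → Prop) [DecidablePred p]
    (hp : ∀ n < N, p (2 * N - 1 - n) ↔ p n) :
    ∑ n ∈ (range N).filter p, extendByZero (halfSum N x) n =
      ∑ n ∈ (range (2 * N)).filter p, extendByZero x n := by
  rw [sum_filter, sum_filter, show range (2 * N) = range (N + N) by rw [two_mul], sum_range_add,
    ← sum_range_reflect (fun n => if p (N + n) then extendByZero x (N + n) else 0) N,
    ← sum_add_distrib]
  refine sum_congr rfl fun n hn => ?_
  have hn : n < N := mem_range.1 hn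
  rw [show N + (N - 1 - n) = 2 * N - 1 - n by omega, extendByZero_halfSum x hn]
  by_cases h : p n <;> simp [h, hp n hn]

lemma perAux_eq_sum (j s : ℕ) (x : Fin (2 ^ (j + s)) → ℝ) (k : Fin (2 ^ j)) :
    perAux j s x k = ∑ n ∈ (range (2 ^ (j + s))).filter (reflIndex j · = k), extendByZero x n := by
  induction s with
  | zero =>
    rw [filter_congr (q := (· = (k : ℕ))) fun n hn =>
        by rw [reflIndex.of_lt (mem_range.1 hn : n < 2 ^ j)],
      filter_eq', if_pos (mem_range.2 k.2 : (k : ℕ) ∈ range (2 ^ (j + 0))), sum_singleton,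
      extendByZero_of_lt _ k.2]
    rfl
  | succ s ih =>
    have e : 2 * 2 ^ (j + s) = 2 ^ (j + (s + 1)) := by rw [← pow_succ']; rfl
    rw [perAux, ih, sum_filter_halfSum _ _ fun n hn =>
      by rw [reflIndex.sub_one_sub (by rw [e]; exact pow_dvd_pow 2 (by omega)) (by omega)],
      extendByZero_cast _ e, e]

lemma reflPer_eq_sum (J j : ℕ) (h : j ≤ J) (x : Fin (2 ^ J) → ℝ) (k : Fin (2 ^ j)) :
    reflPer J j h x k = ∑ n ∈ (range (2 ^ J)).filter (reflIndex j · = k), extendByZero x n := by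
  have e : 2 ^ (j + (J - j)) = 2 ^ J := by rw [Nat.add_sub_cancel' h]
  rw [reflPer, perAux_eq_sum, extendByZero_cast _ e, e]

lemma reflPer_reflPer {J j₁ j₂ : ℕ} (h₁₂ : j₁ ≤ j₂) (h₁ : j₁ ≤ J) (h₂ : j₂ ≤ J)
    (x : Fin (2 ^ J) → ℝ) : reflPer J j₁ h₁ x = reflPer j₂ j₁ h₁₂ (reflPer J j₂ h₂ x) := by
  funext k
  have hmaps : ∀ n ∈ (range (2 ^ J)).filter (reflIndex j₁ · = k),
      reflIndex j₂ n ∈ (range (2 ^ j₂)).filter (reflIndex j₁ · = k) := fun n hn => by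
    rw [mem_filter, reflIndex_reflIndex h₁₂]
    rw [mem_filter] at hn
    exact ⟨mem_range.2 (reflIndex.lt_two_pow j₂ n), hn.2⟩
  rw [reflPer_eq_sum, reflPer_eq_sum, ← sum_fiberwise_of_maps_to hmaps]
  refine sum_congr rfl fun k' hk' => ?_
  obtain ⟨hk'lt, hk'⟩ := mem_filter.1 hk'
  rw [extendByZero_of_lt _ (mem_range.1 hk'lt), reflPer_eq_sum, filter_filter]
  refine sum_congr (filter_congr fun n _ => ?_) fun _ _ => rfl
  constructor
  · exact And.right
  · intro hn
    refine ⟨?_, hn⟩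
    rw [← reflIndex_reflIndex h₁₂, hn, hk']

lemma reflPer_eq_sum_Ico {J j m μ : ℕ} (h : j ≤ J) {x : Fin (2 ^ J) → ℝ} (hx : ShortSupp x m μ)
    (k : Fin (2 ^ j)) :
    reflPer J j h x k = ∑ n ∈ (Ico μ (μ + m)).filter (reflIndex j · = k), extendByZero x n := by
  rw [reflPer_eq_sum]
  symm
  refine sum_subset (filter_subset_filter _ fun n hn => ?_) fun n hn hnW => ?_
  · exact mem_range.2 (by have := hx.bdd; have := (mem_Ico.1 hn).2; omega)
  · obtain ⟨hnr, hnk⟩ := mem_filter.1 hn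
    rw [extendByZero_of_lt _ (mem_range.1 hnr)]
    refine hx.outside _ ?_
    simp only [mem_filter, mem_Ico, not_and] at hnW
    by_contra! h'
    exact hnW ⟨h'.1, h'.2⟩ hnk

section Window

variable {j m μ : ℕ}

lemma dvd_of_reflIndex_eq (hm : m ≤ 2 ^ j) {c n : ℕ} (hc : c ∈ Ico μ (μ + m))
    (hn : n ∈ Ico μ (μ + m)) (h : reflIndex j c = reflIndex j n) (hne : c ≠ n) :
    2 ^ (j + 1) ∣ c + n + 1 := by
  have := pow_succ 2 j
  rw [mem_Ico] at hc hn
  exact (reflIndex.modEq_or_dvd h).resolve_left fun hmod =>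
    hne (hmod.eq_of_lt_add (by omega) (by omega))

lemma filter_reflIndex_eq_pair (hm1 : 1 ≤ m) (hm : m ≤ 2 ^ j)
    (hd : 2 ^ (j + 1) ∣ μ + (μ + m - 1) + 1) :
    (Ico μ (μ + m)).filter (reflIndex j · = reflIndex j μ) = {μ, μ + m - 1} := by
  have := pow_succ 2 j
  ext c
  simp only [mem_filter, mem_insert, mem_singleton]
  constructor
  · rintro ⟨hc, hcμ⟩
    by_contra! hne
    have hμ : μ ∈ Ico μ (μ + m) := mem_Ico.2 ⟨le_rfl, by omega⟩
    have := eq_of_dvd_of_dvd (dvd_of_reflIndex_eq hm hc hμ hcμ hne.1) hd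
    rw [mem_Ico] at hc
    omega
  · rintro (rfl | rfl)
    · exact ⟨mem_Ico.2 ⟨le_rfl, by omega⟩, rfl⟩
    · exact ⟨mem_Ico.2 ⟨by omega, by omega⟩, reflIndex.eq_of_dvd hd⟩

lemma filter_reflIndex_eq_singleton (hm : m ≤ 2 ^ j) {n : ℕ} (hn : n ∈ Ico μ (μ + m))
    (h : ∀ c ∈ Ico μ (μ + m), c ≠ n → ¬ 2 ^ (j + 1) ∣ c + n + 1) :
    (Ico μ (μ + m)).filter (reflIndex j · = reflIndex j n) = {n} := by
  ext c
  simp only [mem_filter, mem_singleton]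
  constructor
  · rintro ⟨hc, hcn⟩
    by_contra hne
    exact h c hc hne (dvd_of_reflIndex_eq hm hc hn hcn hne)
  · rintro rfl
    exact ⟨hn, rfl⟩

/-- If no reflection point of `reflIndex j` sits at the centre of the window, the nearer one
leaves one of the two endpoints without a partner inside the window. -/
lemma filter_reflIndex_eq_singleton_or (hm1 : 1 ≤ m) (hm : m ≤ 2 ^ j)
    (hd : ¬ 2 ^ (j + 1) ∣ μ + (μ + m - 1) + 1) :
    (Ico μ (μ + m)).filter (reflIndex j · = reflIndex j μ) = {μ} ∨
      (Ico μ (μ + m)).filter (reflIndex j · = reflIndex j (μ + m - 1)) = {μ + m - 1} := by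
  have := pow_succ 2 j
  have hμ : μ ∈ Ico μ (μ + m) := mem_Ico.2 ⟨le_rfl, by omega⟩
  have hb : μ + m - 1 ∈ Ico μ (μ + m) := mem_Ico.2 ⟨by omega, by omega⟩
  by_cases ha : ∀ c ∈ Ico μ (μ + m), c ≠ μ → ¬ 2 ^ (j + 1) ∣ c + μ + 1
  · exact Or.inl (filter_reflIndex_eq_singleton hm hμ ha)
  · push Not at ha
    obtain ⟨c, hc, -, hcd⟩ := ha
    refine Or.inr (filter_reflIndex_eq_singleton hm hb fun c' hc' hne hc'd => ?_)
    rw [mem_Ico] at hc hc'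
    have := eq_of_dvd_of_dvd hcd hc'd (by omega) (by omega)
    exact hd (by convert hcd using 1; omega)

end Window

theorem reflPer_ne_zero {J j m μ : ℕ} (h : j ≤ J) {x : Fin (2 ^ J) → ℝ} (hx : ShortSupp x m μ)
    (hnc : NonCancel x m μ) (hm : m ≤ 2 ^ j) : reflPer J j h x ≠ 0 := by
  intro h0
  have hsum : ∀ n, ∑ c ∈ (Ico μ (μ + m)).filter (reflIndex j · = reflIndex j n),
      extendByZero x c = 0 := fun n => by
    rw [← reflPer_eq_sum_Ico h hx ⟨_, reflIndex.lt_two_pow j n⟩, h0, Pi.zero_apply]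
  have hm1 := hx.pos
  have hμ : μ < 2 ^ J := by have := hx.bdd; omega
  have hb : μ + m - 1 < 2 ^ J := by have := hx.bdd; omega
  by_cases hd : 2 ^ (j + 1) ∣ μ + (μ + m - 1) + 1
  · have h2 := (dvd_pow_self 2 (Nat.succ_ne_zero j)).trans hd
    have hpair := hsum μ
    rw [filter_reflIndex_eq_pair hm1 hm hd, sum_pair (show μ ≠ μ + m - 1 by omega),
      extendByZero_of_lt _ hμ, extendByZero_of_lt _ hb] at hpair
    exact hnc (Nat.even_iff.2 (by omega)) _ _ rfl rfl hpair
  · rcases filter_reflIndex_eq_singleton_or hm1 hm hd with hsing | hsing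
    · have hμ0 := hsum μ
      rw [hsing, sum_singleton, extendByZero_of_lt _ hμ] at hμ0
      exact hx.first _ rfl hμ0
    · have hb0 := hsum (μ + m - 1)
      rw [hsing, sum_singleton, extendByZero_of_lt _ hb] at hb0
      exact hx.last _ rfl hb0

lemma reflPer_apply_eq_zero_of_le {J j M : ℕ} (hj : j < J) (h : j ≤ J) (hM : M ≤ 2 ^ j)
    {y : Fin (2 ^ J) → ℝ} (hy : ∀ k : Fin (2 ^ J), (k : ℕ) < 2 ^ J - M → y k = 0)
    (k : Fin (2 ^ j)) (hk : M ≤ k) : reflPer J j h y k = 0 := by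
  rw [reflPer_eq_sum]
  refine sum_eq_zero fun n hn => ?_
  have hnJ : n < 2 ^ J := mem_range.1 (mem_filter.1 hn).1
  have hnk : reflIndex j n = k := (mem_filter.1 hn).2
  rw [extendByZero_of_lt _ hnJ]
  refine hy ⟨n, hnJ⟩ (show n < 2 ^ J - M from by_contra fun hnM => ?_)
  have := reflIndex.of_dvd_of_lt (pow_dvd_pow 2 hj) hnJ (by omega)
  omega

lemma two_mul_le_two_pow_of_clog_lt {M j : ℕ} (h : Nat.clog 2 M < j) : 2 * M ≤ 2 ^ j :=
  calc 2 * M ≤ 2 * 2 ^ Nat.clog 2 M := Nat.mul_le_mul_left 2 (Nat.le_pow_clog one_lt_two M)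
    _ = 2 ^ (Nat.clog 2 M + 1) := (pow_succ' 2 _).symm
    _ ≤ 2 ^ j := Nat.pow_le_pow_right two_pos h

theorem at_most_one_support_in_last_M (J m M μ : ℕ) (x : Fin (2 ^ J) → ℝ)
    (hmM : m ≤ M) (hs : ShortSupp x m μ) (hnc : NonCancel x m μ)
    (j₁ j₂ : ℕ) (h₁L : Nat.clog 2 M + 1 ≤ j₁) (h₁J : j₁ ≤ J)
    (h₂L : Nat.clog 2 M + 1 ≤ j₂) (h₂J : j₂ ≤ J)
    (h₁ : ∀ k : Fin (2 ^ j₁), (k : ℕ) < 2 ^ j₁ - M → reflPer J j₁ h₁J x k = 0)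
    (h₂ : ∀ k : Fin (2 ^ j₂), (k : ℕ) < 2 ^ j₂ - M → reflPer J j₂ h₂J x k = 0) :
    j₁ = j₂ := by
  wlog hle : j₁ ≤ j₂ generalizing j₁ j₂
  · exact (this j₂ j₁ h₂L h₂J h₁L h₁J h₂ h₁ (by omega)).symm
  rcases hle.eq_or_lt with heq | hlt
  · exact heq
  have hM := two_mul_le_two_pow_of_clog_lt h₁L
  refine absurd (funext fun k => ?_) (reflPer_ne_zero h₁J hs hnc (by omega))
  by_cases hk : (k : ℕ) < 2 ^ j₁ - M
  · exact h₁ k hk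
  · rw [reflPer_reflPer hle h₁J h₂J]
    exact reflPer_apply_eq_zero_of_le hlt hle (by omega) h₂ k (by omega)
end

section
/- Let N = 2^J and x ∈ ℝ^N with short support of length m ≤ M satisfying the non-cancellation condition, L := ⌈log₂ M⌉ + 1, and let j' be the unique index (if it exists) with S^{(j')} ⊂ {2^{j'}−M,...,2^{j'}−1}. Then for every j ∈ {L,...,J−1} \ {j'}, the support length of x^{(j+1)} equals that of x^{(j)}: m^{(j)} = m^{(j+1)}. -/
open Matrix

/-!
Folding `x^{(j+1)}` into `x^{(j)}` adds each entry of the first half to the mirrored entry of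
the second half. Folding never widens a window containing the support, so `m^{(j+1)} ≤ m ≤ M`.
If the support of `x^{(j+1)}` straddled the midpoint `2^j`, every entry of `x^{(j)}` below
`2^j - m^{(j+1)}` would be a sum of two zeros, contradicting the nonzero entry below `2^j - M`.
So the support lies in one half, and folding merely copies or mirrors it.
-/

namespace ShortSupp

variable {n m μ : ℕ} {y : Fin n → ℝ}

theorem first_lt (hy : ShortSupp y m μ) : μ < n := by
  have := hy.bdd; have := hy.pos; omega

theorem last_lt (hy : ShortSupp y m μ) : μ + m - 1 < n := by
  have := hy.bdd; have := hy.pos; omega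

theorem bounds_of_ne_zero (hy : ShortSupp y m μ) {k : Fin n} (hk : y k ≠ 0) :
    μ ≤ k ∧ (k : ℕ) < μ + m := by
  by_contra h
  exact hk (hy.outside k (by omega))

theorem unique {m' μ' : ℕ} (hy : ShortSupp y m μ) (hy' : ShortSupp y m' μ') :
    m = m' ∧ μ = μ' := by
  have h₁ := hy'.bounds_of_ne_zero (hy.first ⟨μ, hy.first_lt⟩ rfl)
  have h₂ := hy'.bounds_of_ne_zero (hy.last ⟨μ + m - 1, hy.last_lt⟩ rfl)
  have h₃ := hy.bounds_of_ne_zero (hy'.first ⟨μ', hy'.first_lt⟩ rfl)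
  have h₄ := hy.bounds_of_ne_zero (hy'.last ⟨μ' + m' - 1, hy'.last_lt⟩ rfl)
  simp only at h₁ h₂ h₃ h₄
  have := hy.pos
  have := hy'.pos
  omega

theorem comp_cast {N : ℕ} (h : n = N) {y : Fin N → ℝ} (hy : ShortSupp y m μ) :
    ShortSupp (fun k => y (Fin.cast h k)) m μ := by
  subst h
  exact hy

theorem rev (hy : ShortSupp y m μ) : ShortSupp (fun k => y k.rev) m (n - μ - m) where
  pos := hy.pos
  bdd := by have := hy.bdd; omega
  first k hk := hy.last _ (by have := hy.bdd; have := hy.pos; simp only [Fin.val_rev]; omega)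
  last k hk := hy.first _ (by have := hy.bdd; have := hy.pos; simp only [Fin.val_rev]; omega)
  outside k hk := hy.outside _ (by have := hy.bdd; simp only [Fin.val_rev]; omega)

end ShortSupp

def SupportWidthLE {n : ℕ} (y : Fin n → ℝ) (w : ℕ) : Prop :=
  ∃ a : ℕ, ∀ k : Fin n, y k ≠ 0 → a ≤ k ∧ (k : ℕ) < a + w

theorem ShortSupp.supportWidthLE {n m μ : ℕ} {y : Fin n → ℝ} (hy : ShortSupp y m μ) :
    SupportWidthLE y m :=
  ⟨μ, fun _ hk => hy.bounds_of_ne_zero hk⟩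

theorem ShortSupp.le_of_supportWidthLE {n m μ w : ℕ} {y : Fin n → ℝ} (hy : ShortSupp y m μ)
    (hw : SupportWidthLE y w) : m ≤ w := by
  obtain ⟨a, ha⟩ := hw
  have h₁ := ha _ (hy.first ⟨μ, hy.first_lt⟩ rfl)
  have h₂ := ha _ (hy.last ⟨μ + m - 1, hy.last_lt⟩ rfl)
  simp only at h₁ h₂
  have := hy.pos
  omega

theorem SupportWidthLE.comp_cast {n N w : ℕ} (h : n = N) {y : Fin N → ℝ}
    (hy : SupportWidthLE y w) : SupportWidthLE (fun k => y (Fin.cast h k)) w := by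
  subst h
  exact hy

theorem halfSum_rev (n : ℕ) (y : Fin (2 * n) → ℝ) :
    halfSum n (fun k => y k.rev) = halfSum n y := by
  ext k
  simp only [halfSum]
  rw [add_comm]
  congr 2 <;> ext <;> simp only [Fin.val_rev] <;> omega

theorem SupportWidthLE.halfSum {n w : ℕ} {y : Fin (2 * n) → ℝ} (hy : SupportWidthLE y w) :
    SupportWidthLE (_root_.halfSum n y) w := by
  obtain ⟨a, ha⟩ := hy
  have key : ∀ k : Fin n, _root_.halfSum n y k ≠ 0 → (a ≤ k ∧ (k : ℕ) < a + w) ∨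
      (a ≤ 2 * n - 1 - k ∧ 2 * n - 1 - k < a + w) := by
    intro k hk
    by_contra! h
    refine hk ?_
    rw [_root_.halfSum, not_imp_comm.mp (ha _) (by simp only; omega),
      not_imp_comm.mp (ha _) (by simp only; omega), add_zero]
  -- the window is kept, reflected, or (when it straddles `n`) moved to end at `n`
  refine ⟨if a + w ≤ n then a else if n ≤ a then 2 * n - a - w else n - w, fun k hk => ?_⟩
  have := k.isLt
  split_ifs <;> rcases key k hk with h | h <;> omega

namespace ShortSupp

variable {n m μ : ℕ} {y : Fin (2 * n) → ℝ}

theorem halfSum_of_add_le (hy : ShortSupp y m μ) (h : μ + m ≤ n) :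
    ShortSupp (halfSum n y) m μ := by
  have key : ∀ k : Fin n, halfSum n y k = y ⟨k, by omega⟩ := fun k => by
    rw [halfSum, hy.outside ⟨2 * n - 1 - k, by omega⟩ (Or.inr (by simp only; omega)), add_zero]
  exact
    { pos := hy.pos
      bdd := h
      first := fun k hk => by rw [key]; exact hy.first _ hk
      last := fun k hk => by rw [key]; exact hy.last _ hk
      outside := fun k hk => by rw [key]; exact hy.outside _ hk }

theorem halfSum_of_le (hy : ShortSupp y m μ) (h : n ≤ μ) :
    ShortSupp (halfSum n y) m (2 * n - μ - m) := by
  rw [← halfSum_rev]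
  exact hy.rev.halfSum_of_add_le (by have := hy.bdd; omega)

theorem halfSum_eq_zero (hy : ShortSupp y m μ) (hμ : μ < n) (hμm : n < μ + m) {k : Fin n}
    (hk : (k : ℕ) + m < n) : halfSum n y k = 0 := by
  rw [halfSum, hy.outside _ (Or.inl (by simp only; omega)),
    hy.outside _ (Or.inr (by simp only; omega)), add_zero]

theorem halfSum_length_eq {m' μ' : ℕ} (hy : ShortSupp y m μ)
    (hz : ShortSupp (halfSum n y) m' μ')
    (hk : ∃ k : Fin n, (k : ℕ) + m < n ∧ halfSum n y k ≠ 0) : m' = m := by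
  rcases le_or_gt (μ + m) n with h | h
  · exact (hz.unique (hy.halfSum_of_add_le h)).1
  rcases le_or_gt n μ with h' | h'
  · exact (hz.unique (hy.halfSum_of_le h')).1
  obtain ⟨k, hkm, hk⟩ := hk
  exact absurd (hy.halfSum_eq_zero h' h hkm) hk

end ShortSupp

theorem perAux_congr {j s s' : ℕ} (hs : s = s') {y : Fin (2 ^ (j + s)) → ℝ}
    {y' : Fin (2 ^ (j + s')) → ℝ}
    (hy : ∀ (i : Fin (2 ^ (j + s))) (i' : Fin (2 ^ (j + s'))), (i : ℕ) = i' → y i = y' i') :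
    perAux j s y = perAux j s' y' := by
  subst hs
  congr
  funext i
  exact hy i i rfl

theorem perAux_succ (j s : ℕ) (y : Fin (2 ^ (j + (s + 1))) → ℝ) :
    perAux j (s + 1) y = halfSum (2 ^ j) (fun i =>
      perAux (j + 1) s (fun i' => y (Fin.cast (by ring_nf) i'))
        (Fin.cast (pow_succ' 2 j).symm i)) := by
  induction s with
  | zero => rfl
  | succ s ih =>
    rw [perAux, ih, perAux]
    congr 3
    refine funext fun i => congrFun (congrArg (perAux (j + 1) s) (funext fun i' => ?_)) _
    simp only [halfSum]
    congr 2
    ext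
    simp only [Fin.val_cast]
    ring_nf

theorem reflPer_succ (J j : ℕ) (hJ : j + 1 ≤ J) (x : Fin (2 ^ J) → ℝ) :
    reflPer J j (le_trans (Nat.le_succ j) hJ) x =
      halfSum (2 ^ j) (fun i => reflPer J (j + 1) hJ x (Fin.cast (pow_succ' 2 j).symm i)) := by
  rw [reflPer, perAux_congr (s' := J - (j + 1) + 1) (by omega)
    (y' := fun i => x (Fin.cast (by congr 1; omega) i)) fun _ _ h => congrArg x (Fin.ext h),
    perAux_succ]
  rfl

theorem perAux_supportWidthLE (j : ℕ) {w : ℕ} :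
    ∀ (s : ℕ) {y : Fin (2 ^ (j + s)) → ℝ}, SupportWidthLE y w → SupportWidthLE (perAux j s y) w
  | 0, _, hy => hy
  | s + 1, _, hy => perAux_supportWidthLE j s (hy.comp_cast _).halfSum

theorem reflPer_supportWidthLE {J j w : ℕ} (h : j ≤ J) {x : Fin (2 ^ J) → ℝ}
    (hx : SupportWidthLE x w) : SupportWidthLE (reflPer J j h x) w :=
  perAux_supportWidthLE j (J - j) (hx.comp_cast _)

theorem support_length_invariant_general (J m M μ : ℕ) (x : Fin (2 ^ J) → ℝ)
    (hmM : m ≤ M) (hs : ShortSupp x m μ)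
    (j : ℕ) (hJ : j + 1 ≤ J)
    (hnotlast : ∃ k : Fin (2 ^ j), (k : ℕ) < 2 ^ j - M ∧
        reflPer J j (le_trans (Nat.le_succ j) hJ) x k ≠ 0)
    (m₁ μ₁ m₂ μ₂ : ℕ)
    (h₁ : ShortSupp (reflPer J j (le_trans (Nat.le_succ j) hJ) x) m₁ μ₁)
    (h₂ : ShortSupp (reflPer J (j + 1) hJ x) m₂ μ₂) :
    m₁ = m₂ := by
  have hm₂ : m₂ ≤ m := h₂.le_of_supportWidthLE (reflPer_supportWidthLE hJ hs.supportWidthLE)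
  obtain ⟨k, hkM, hk⟩ := hnotlast
  rw [reflPer_succ J j hJ] at h₁ hk
  exact (h₂.comp_cast _).halfSum_length_eq h₁ ⟨k, by omega, hk⟩

theorem support_length_invariant (J m M μ : ℕ) (x : Fin (2 ^ J) → ℝ)
    (hmM : m ≤ M) (hs : ShortSupp x m μ) (hnc : NonCancel x m μ)
    (j : ℕ) (hL : Nat.clog 2 M + 1 ≤ j) (hJ : j + 1 ≤ J)
    (hnotlast : ∃ k : Fin (2 ^ j), (k : ℕ) < 2 ^ j - M ∧
        reflPer J j (le_trans (Nat.le_succ j) hJ) x k ≠ 0)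
    (m₁ μ₁ m₂ μ₂ : ℕ)
    (h₁ : ShortSupp (reflPer J j (le_trans (Nat.le_succ j) hJ) x) m₁ μ₁)
    (h₂ : ShortSupp (reflPer J (j + 1) hJ x) m₂ μ₂) :
    m₁ = m₂ :=
  support_length_invariant_general J m M μ x hmM hs j hJ hnotlast m₁ μ₁ m₂ μ₂ h₁ h₂
end

section
/- Let N = 2^J and x ∈ ℝ^N with short support of length m ≤ M satisfying the non-cancellation condition, L := ⌈log₂ M⌉ + 1, and let j ∈ {L,...,J−1} with the support of x^{(j)} not contained in {2^j − M, ..., 2^j − 1}. If x^{(j)} has support interval {μ^{(j)},...,ν^{(j)}}, then either x^{(j+1)} = (x^{(j)T}, 0^T)^T or x^{(j+1)} = (0^T, (J_{2^j} x^{(j)})^T)^T, with support interval {μ^{(j)},...,ν^{(j)}} or {2^{j+1}−1−ν^{(j)},...,2^{j+1}−1−μ^{(j)}}, respectively. -/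
open Matrix

noncomputable def hsN (n : ℕ) (f : ℕ → ℝ) : ℕ → ℝ := fun k => f k + f (2 * n - 1 - k)

noncomputable def paN (j : ℕ) : ℕ → (ℕ → ℝ) → ℕ → ℝ
  | 0, f => f
  | s + 1, f => paN j s (hsN (2 ^ (j + s)) f)

lemma paN_comm (s : ℕ) : ∀ (j : ℕ) (f : ℕ → ℝ),
    paN j (s + 1) f = hsN (2 ^ j) (paN (j + 1) s f) := by
  induction s with
  | zero => intro j f; rfl
  | succ s ih =>
    intro j f
    have h : j + (s + 1) = (j + 1) + s := by omega
    calc paN j (s + 1 + 1) f = paN j (s + 1) (hsN (2 ^ (j + (s + 1))) f) := rfl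
      _ = hsN (2 ^ j) (paN (j + 1) s (hsN (2 ^ (j + (s + 1))) f)) := ih j _
      _ = hsN (2 ^ j) (paN (j + 1) (s + 1) f) := by rw [h]; rfl

lemma perAux_eq_paN (j : ℕ) : ∀ (s : ℕ) (x : Fin (2 ^ (j + s)) → ℝ) (f : ℕ → ℝ),
    (∀ (i : ℕ) (h : i < 2 ^ (j + s)), f i = x ⟨i, h⟩) →
    ∀ k : Fin (2 ^ j), perAux j s x k = paN j s f k := by
  intro s
  induction s with
  | zero =>
    intro x f hf k
    exact ((hf k k.isLt).trans (congrArg x (Fin.ext rfl))).symm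
  | succ s ih =>
    intro x f hf k
    show perAux j s _ k = paN j s _ k
    apply ih
    intro i h
    have h2 : (2:ℕ) ^ (j + (s+1)) = 2 * 2 ^ (j + s) := by
      rw [show j + (s+1) = (j+s)+1 from rfl, pow_succ]; ring
    show hsN (2 ^ (j+s)) f i = halfSum (2 ^ (j + s)) _ ⟨i, h⟩
    unfold hsN halfSum
    rw [hf i (by omega), hf (2 * 2 ^ (j+s) - 1 - i) (by omega)]
    rfl

lemma reflPer_eq_paN (J j : ℕ) (h : j ≤ J) (x : Fin (2 ^ J) → ℝ) (k : Fin (2 ^ j)) :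
    reflPer J j h x k =
      paN j (J - j) (fun i => if hi : i < 2 ^ J then x ⟨i, hi⟩ else 0) k := by
  apply perAux_eq_paN
  intro i hi
  have hJ : j + (J - j) = J := by omega
  have hi' : i < 2 ^ J := by rw [← hJ]; exact hi
  rw [dif_pos hi']
  rfl

lemma supp_hsN (n m a : ℕ) (f : ℕ → ℝ)
    (hf : ∀ i < 2 * n, f i ≠ 0 → a ≤ i ∧ i < a + m) :
    ∃ b, ∀ i < n, hsN n f i ≠ 0 → b ≤ i ∧ i < b + m := by
  refine ⟨if a + m ≤ n then a else min a (2 * n - a - m), fun i hi hne => ?_⟩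
  have hor : f i ≠ 0 ∨ f (2 * n - 1 - i) ≠ 0 := by
    by_contra hc; push_neg at hc
    exact hne (by unfold hsN; rw [hc.1, hc.2, add_zero])
  rcases hor with h | h
  · have := hf i (by omega) h; split_ifs <;> omega
  · have := hf _ (by omega) h; split_ifs <;> omega

lemma supp_paN (m : ℕ) : ∀ (s j a : ℕ) (f : ℕ → ℝ),
    (∀ i < 2 ^ (j + s), f i ≠ 0 → a ≤ i ∧ i < a + m) →
    ∃ b, ∀ i < 2 ^ j, paN j s f i ≠ 0 → b ≤ i ∧ i < b + m := by
  intro s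
  induction s with
  | zero => intro j a f hf; exact ⟨a, fun i hi => hf i hi⟩
  | succ s ih =>
    intro j a f hf
    have h : j + (s + 1) = (j + 1) + s := by omega
    obtain ⟨b, hb⟩ := ih (j + 1) a f (by rw [← h]; exact hf)
    have h2 : 2 * 2 ^ j = 2 ^ (j + 1) := by rw [pow_succ]; ring
    obtain ⟨c, hc⟩ := supp_hsN (2 ^ j) m b (paN (j + 1) s f) (fun i hi => hb i (by omega))
    refine ⟨c, fun i hi hne => hc i hi ?_⟩
    rw [paN_comm] at hne
    exact hne

theorem reflPer_two_possibilities (J m M μ : ℕ) (x : Fin (2 ^ J) → ℝ)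
    (hmM : m ≤ M) (hs : ShortSupp x m μ) (hnc : NonCancel x m μ)
    (j : ℕ) (hL : Nat.clog 2 M + 1 ≤ j) (hJ : j + 1 ≤ J)
    (hnotlast : ∃ k : Fin (2 ^ j), (k : ℕ) < 2 ^ j - M ∧
        reflPer J j (le_trans (Nat.le_succ j) hJ) x k ≠ 0)
    (m₁ μ₁ : ℕ)
    (h₁ : ShortSupp (reflPer J j (le_trans (Nat.le_succ j) hJ) x) m₁ μ₁) :
    ((∀ k : Fin (2 ^ (j + 1)), reflPer J (j + 1) hJ x k =
        if hk : (k : ℕ) < 2 ^ j then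
          reflPer J j (le_trans (Nat.le_succ j) hJ) x ⟨(k : ℕ), hk⟩
        else 0) ∧
      ShortSupp (reflPer J (j + 1) hJ x) m₁ μ₁) ∨
    ((∀ k : Fin (2 ^ (j + 1)), reflPer J (j + 1) hJ x k =
        if hk : 2 ^ j ≤ (k : ℕ) then
          reflPer J j (le_trans (Nat.le_succ j) hJ) x
            ⟨2 ^ (j + 1) - 1 - (k : ℕ), by
              have hk2 := k.isLt
              have h2 : 2 ^ (j + 1) = 2 * 2 ^ j := by rw [pow_succ]; ring
              omega⟩
        else 0) ∧
      ShortSupp (reflPer J (j + 1) hJ x) m₁ (2 ^ (j + 1) - m₁ - μ₁)) := by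
  have hpow : (2:ℕ) ^ (j + 1) = 2 * 2 ^ j := by rw [pow_succ]; ring
  set Y : ℕ → ℝ := paN (j + 1) (J - (j + 1))
      (fun i => if hi : i < 2 ^ J then x ⟨i, hi⟩ else 0) with hYdef
  have hy : ∀ k : Fin (2 ^ (j + 1)), reflPer J (j + 1) hJ x k = Y (k : ℕ) :=
    fun k => reflPer_eq_paN J (j + 1) hJ x k
  have hz' : ∀ (i : ℕ) (h : i < 2 ^ j),
      reflPer J j (le_trans (Nat.le_succ j) hJ) x ⟨i, h⟩ =
        Y i + Y (2 ^ (j + 1) - 1 - i) := by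
    intro i h
    have e1 : reflPer J j (le_trans (Nat.le_succ j) hJ) x ⟨i, h⟩ =
        paN j (J - j) (fun i => if hi : i < 2 ^ J then x ⟨i, hi⟩ else 0) i :=
      reflPer_eq_paN J j (le_trans (Nat.le_succ j) hJ) x ⟨i, h⟩
    rw [e1, show J - j = (J - (j + 1)) + 1 by omega, paN_comm]
    unfold hsN
    rw [← hpow]
  -- support of Y is contained in a window of length m
  have hfsupp : ∀ i < 2 ^ ((j + 1) + (J - (j + 1))),
      (fun i => if hi : i < 2 ^ J then x ⟨i, hi⟩ else 0) i ≠ 0 → μ ≤ i ∧ i < μ + m := by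
    rw [show (j + 1) + (J - (j + 1)) = J by omega]
    intro i hi hne
    have hne' : (if hi : i < 2 ^ J then x ⟨i, hi⟩ else 0) ≠ 0 := hne
    rw [dif_pos hi] at hne'
    by_contra hc
    exact hne' (hs.outside ⟨i, hi⟩ (show i < μ ∨ μ + m ≤ i by omega))
  obtain ⟨a, ha⟩ := supp_paN m (J - (j + 1)) (j + 1) μ _ hfsupp
  rw [← hYdef] at ha
  rcases le_or_gt (a + m) (2 ^ j) with hA | hA'
  · -- support in first half
    have hR0 : ∀ i, 2 ^ j ≤ i → i < 2 ^ (j + 1) → Y i = 0 := by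
      intro i h1 h2
      by_contra hne
      have := ha i h2 hne
      omega
    have hEq : ∀ k : Fin (2 ^ (j + 1)), reflPer J (j + 1) hJ x k =
        if hk : (k : ℕ) < 2 ^ j then
          reflPer J j (le_trans (Nat.le_succ j) hJ) x ⟨(k : ℕ), hk⟩
        else 0 := by
      intro k
      rw [hy k]
      by_cases hk : (k : ℕ) < 2 ^ j
      · rw [dif_pos hk, hz' (k : ℕ) hk,
          hR0 (2 ^ (j + 1) - 1 - (k : ℕ)) (by omega) (by omega), add_zero]
      · rw [dif_neg hk]
        exact hR0 _ (by omega) k.isLt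
    have hb := h₁.bdd
    have hp := h₁.pos
    refine Or.inl ⟨hEq, ⟨h₁.pos, by omega, ?_, ?_, ?_⟩⟩
    · intro k hk
      rw [hEq k, dif_pos (show (k : ℕ) < 2 ^ j by omega)]
      exact h₁.first _ hk
    · intro k hk
      rw [hEq k, dif_pos (show (k : ℕ) < 2 ^ j by omega)]
      exact h₁.last _ hk
    · intro k hk
      rw [hEq k]
      by_cases h' : (k : ℕ) < 2 ^ j
      · rw [dif_pos h']
        exact h₁.outside _ hk
      · rw [dif_neg h']
  rcases le_or_gt (2 ^ j) a with hB | hB'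
  · -- support in second half
    have hL0 : ∀ i, i < 2 ^ j → Y i = 0 := by
      intro i h1
      by_contra hne
      have := ha i (by omega) hne
      omega
    have hEq : ∀ k : Fin (2 ^ (j + 1)), reflPer J (j + 1) hJ x k =
        if hk : 2 ^ j ≤ (k : ℕ) then
          reflPer J j (le_trans (Nat.le_succ j) hJ) x
            ⟨2 ^ (j + 1) - 1 - (k : ℕ), by have hk2 := k.isLt; omega⟩
        else 0 := by
      intro k
      rw [hy k]
      have hk2 := k.isLt
      by_cases hk : 2 ^ j ≤ (k : ℕ)
      · have hlt : 2 ^ (j + 1) - 1 - (k : ℕ) < 2 ^ j := by omega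
        rw [dif_pos hk, hz' (2 ^ (j + 1) - 1 - (k : ℕ)) hlt, hL0 _ hlt, zero_add]
        congr 1
        omega
      · rw [dif_neg hk]
        exact hL0 _ (by omega)
    have hb := h₁.bdd
    have hp := h₁.pos
    refine Or.inr ⟨hEq, ⟨h₁.pos, by omega, ?_, ?_, ?_⟩⟩
    · intro k hk
      have hk2 := k.isLt
      rw [hEq k, dif_pos (show 2 ^ j ≤ (k : ℕ) by omega)]
      exact h₁.last _ (show 2 ^ (j + 1) - 1 - (k : ℕ) = μ₁ + m₁ - 1 by omega)
    · intro k hk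
      have hk2 := k.isLt
      rw [hEq k, dif_pos (show 2 ^ j ≤ (k : ℕ) by omega)]
      exact h₁.first _ (show 2 ^ (j + 1) - 1 - (k : ℕ) = μ₁ by omega)
    · intro k hk
      have hk2 := k.isLt
      rw [hEq k]
      by_cases h' : 2 ^ j ≤ (k : ℕ)
      · rw [dif_pos h']
        exact h₁.outside _ (show 2 ^ (j + 1) - 1 - (k : ℕ) < μ₁ ∨
          μ₁ + m₁ ≤ 2 ^ (j + 1) - 1 - (k : ℕ) by omega)
      · rw [dif_neg h']
  · -- straddling: contradicts hnotlast
    exfalso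
    obtain ⟨k, hkM, hkne⟩ := hnotlast
    have hk2 := k.isLt
    have e : reflPer J j (le_trans (Nat.le_succ j) hJ) x k =
        Y (k : ℕ) + Y (2 ^ (j + 1) - 1 - (k : ℕ)) := hz' (k : ℕ) k.isLt
    rw [e] at hkne
    have hone : Y (k : ℕ) ≠ 0 ∨ Y (2 ^ (j + 1) - 1 - (k : ℕ)) ≠ 0 := by
      by_contra hc
      push_neg at hc
      rw [hc.1, hc.2, add_zero] at hkne
      exact hkne rfl
    have h1 := hs.pos
    rcases hone with h | h
    · have := ha _ (by omega) h
      omega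
    · have := ha _ (by omega) h
      omega
end

section
/- Let j ≥ 1, let S ⊂ {0,...,2^j − 1} be a set of size m, and define the m×m matrix T := (cos((2k+1)(2l+1)π/(2·2^{j+1})))_{k=0,...,m−1; l ∈ S}. Then T is invertible. -/
open Matrix Polynomial Real

lemma cheb_natDegree_le : ∀ n : ℕ, (Chebyshev.T ℝ (n : ℤ)).natDegree ≤ n := by
  intro n
  induction n using Nat.strong_induction_on with
  | _ n ih =>
    match n with
    | 0 => simp [Chebyshev.T_zero]
    | 1 => simp [Chebyshev.T_one, natDegree_X_le]
    | (n+2) =>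
      rw [show ((n+2 : ℕ) : ℤ) = (n : ℤ) + 2 by push_cast; ring, Chebyshev.T_add_two]
      refine (natDegree_sub_le _ _).trans (max_le ?_ ((ih n (by omega)).trans (by omega)))
      refine (natDegree_mul_le).trans ?_
      have h1 : ((2 * X : ℝ[X])).natDegree ≤ 1 := by compute_degree
      have h2 := ih (n+1) (by omega)
      rw [show ((n : ℤ) + 1) = ((n+1 : ℕ) : ℤ) by push_cast; ring]
      omega

lemma cheb_coeff_top : ∀ n : ℕ, (Chebyshev.T ℝ ((n + 1 : ℕ) : ℤ)).coeff (n+1) = 2 ^ n := by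
  intro n
  induction n with
  | zero => simp [Chebyshev.T_one]
  | succ n ih =>
    rw [show ((n + 2 : ℕ) : ℤ) = (n : ℤ) + 2 by push_cast; ring, Chebyshev.T_add_two,
      coeff_sub]
    have hTn : (Chebyshev.T ℝ (n : ℤ)).coeff (n + 2) = 0 :=
      coeff_eq_zero_of_natDegree_lt (lt_of_le_of_lt (cheb_natDegree_le n) (by omega))
    have h2 : (2 * X * Chebyshev.T ℝ ((n : ℤ) + 1)).coeff (n + 2)
        = 2 * (Chebyshev.T ℝ ((n : ℤ) + 1)).coeff (n + 1) := by
      rw [show (2 * X * Chebyshev.T ℝ ((n : ℤ) + 1)) =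
        C 2 * (X * Chebyshev.T ℝ ((n : ℤ) + 1)) by rw [show (C 2 : ℝ[X]) = 2 from map_ofNat C 2]; ring]
      rw [coeff_C_mul, coeff_X_mul]
    rw [h2, hTn, show ((n : ℤ) + 1) = ((n+1 : ℕ) : ℤ) by push_cast; ring, ih]
    ring

lemma cos_odd_mul_pi_sub (k : ℕ) (x : ℝ) :
    Real.cos ((2 * (k : ℝ) + 1) * (Real.pi - x)) = -Real.cos ((2 * (k : ℝ) + 1) * x) := by
  rw [show (2 * (k : ℝ) + 1) * (Real.pi - x)
      = (Real.pi - (2 * (k : ℝ) + 1) * x) + (k : ℤ) * (2 * Real.pi) by push_cast; ring,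
    Real.cos_add_int_mul_two_pi, Real.cos_pi_sub]

theorem restricted_cosIV_isUnit (j m : ℕ) (hj : 1 ≤ j) (S : Finset ℕ)
    (hS : ∀ s ∈ S, s < 2 ^ j) (hcard : S.card = m) :
    IsUnit (Matrix.of fun k l : Fin m =>
      Real.cos ((2 * (k : ℝ) + 1) * (2 * ((S.orderIsoOfFin hcard l : ℕ) : ℝ) + 1) *
        Real.pi / (2 * (2 : ℝ) ^ (j + 1)))) := by
  classical
  set s : Fin m → ℕ := fun l => (S.orderIsoOfFin hcard l : ℕ) with hs
  set θ : Fin m → ℝ := fun l => (2 * (s l : ℝ) + 1) * Real.pi / (2 * 2 ^ (j + 1)) with hθ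
  have hden : (0:ℝ) < 2 * 2 ^ (j + 1) := by positivity
  have hθpos : ∀ l, 0 < θ l := by
    intro l
    apply div_pos _ hden
    positivity
  have hθlt : ∀ l, θ l < Real.pi / 2 := by
    intro l
    rw [hθ, div_lt_iff₀ hden]
    have hsl : (s l : ℝ) + 1 ≤ 2 ^ j := by
      have := hS _ (S.orderIsoOfFin hcard l).2
      exact_mod_cast Nat.succ_le_of_lt this
    have h1 : (2 * (s l : ℝ) + 1) < 2 ^ (j + 1) := by
      rw [pow_succ]
      nlinarith
    nlinarith [mul_lt_mul_of_pos_right h1 Real.pi_pos]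
  have hsinj : Function.Injective s := by
    intro a b hab
    exact (S.orderIsoOfFin hcard).injective (Subtype.ext hab)
  have hθinj : Function.Injective θ := by
    intro a b hab
    apply hsinj
    rw [hθ] at hab
    rw [div_eq_div_iff hden.ne' hden.ne'] at hab
    have h1 := mul_right_cancel₀ hden.ne' hab
    have h2 := mul_right_cancel₀ Real.pi_ne_zero h1
    have : (s a : ℝ) = (s b : ℝ) := by linarith
    exact_mod_cast this
  have hcospos : ∀ l, 0 < Real.cos (θ l) := fun l =>
    Real.cos_pos_of_mem_Ioo ⟨by linarith [hθpos l, Real.pi_pos], hθlt l⟩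
  have hcosinj : ∀ a b : Fin m, Real.cos (θ a) = Real.cos (θ b) → a = b := by
    intro a b hab
    apply hθinj
    refine Real.injOn_cos ⟨(hθpos a).le, ?_⟩ ⟨(hθpos b).le, ?_⟩ hab
    · linarith [hθlt a, Real.pi_pos]
    · linarith [hθlt b, Real.pi_pos]
  rw [Matrix.isUnit_iff_isUnit_det, isUnit_iff_ne_zero]
  intro hdet
  obtain ⟨v, hv0, hvM⟩ := Matrix.exists_vecMul_eq_zero_iff.mpr hdet
  have hsum : ∀ l : Fin m, ∑ k : Fin m, v k * Real.cos ((2 * (k : ℝ) + 1) * θ l) = 0 := by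
    intro l
    have h := congrFun hvM l
    simp only [Matrix.vecMul, dotProduct, Matrix.of_apply, Pi.zero_apply] at h
    rw [← h]
    apply Finset.sum_congr rfl
    intro k _
    congr 2
    rw [hθ]
    ring
  set p : ℝ[X] := ∑ k : Fin m, C (v k) * Chebyshev.T ℝ ((2 * (k : ℕ) + 1 : ℕ) : ℤ) with hp
  have hp_eval : ∀ φ : ℝ, p.eval (Real.cos φ)
      = ∑ k : Fin m, v k * Real.cos ((2 * (k : ℝ) + 1) * φ) := by
    intro φ
    rw [hp, eval_finset_sum]
    apply Finset.sum_congr rfl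
    intro k _
    rw [eval_mul, eval_C, Polynomial.Chebyshev.T_real_cos]
    congr 2
    push_cast
    ring
  -- the 2m+1 roots
  have heval1 : ∀ l, p.eval (Real.cos (θ l)) = 0 := fun l => by
    rw [hp_eval]; exact hsum l
  have heval2 : ∀ l, p.eval (-Real.cos (θ l)) = 0 := by
    intro l
    rw [← Real.cos_pi_sub, hp_eval]
    have : ∀ k : Fin m, v k * Real.cos ((2 * (k : ℝ) + 1) * (Real.pi - θ l))
        = -(v k * Real.cos ((2 * (k : ℝ) + 1) * θ l)) := by
      intro k
      rw [cos_odd_mul_pi_sub]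
      ring
    rw [Finset.sum_congr rfl fun k _ => this k, Finset.sum_neg_distrib, hsum l, neg_zero]
  have heval3 : p.eval 0 = 0 := by
    have h0 : p.eval (Real.cos (Real.pi / 2)) = 0 := by
      rw [hp_eval]
      apply Finset.sum_eq_zero
      intro k _
      have : Real.cos ((2 * (k : ℝ) + 1) * (Real.pi / 2)) = 0 := by
        rw [Real.cos_eq_zero_iff]
        exact ⟨k, by push_cast; ring⟩
      rw [this, mul_zero]
    simpa [Real.cos_pi_div_two] using h0
  -- p = 0
  set f : (Fin m ⊕ Fin m) ⊕ Unit → ℝ := fun i =>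
    match i with
    | Sum.inl (Sum.inl l) => Real.cos (θ l)
    | Sum.inl (Sum.inr l) => -Real.cos (θ l)
    | Sum.inr _ => 0 with hf
  have hfinj : Function.Injective f := by
    rintro ((a|a)|a) ((b|b)|b) hab <;> simp only [hf] at hab <;>
      first
        | rfl
        | exact congrArg (fun x => Sum.inl (Sum.inl x)) (hcosinj a b hab)
        | exact congrArg (fun x => Sum.inl (Sum.inr x)) (hcosinj a b (neg_injective hab))
        | exact absurd hab (by have := hcospos a; have := hcospos b; intro h; linarith)
        | exact absurd hab (by have := hcospos a; intro h; linarith)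
        | exact absurd hab (by have := hcospos b; intro h; linarith)
  have hfeval : ∀ i, p.eval (f i) = 0 := by
    rintro ((l | l) | u)
    · exact heval1 l
    · exact heval2 l
    · exact heval3
  have hdeg : p.natDegree < Fintype.card ((Fin m ⊕ Fin m) ⊕ Unit) := by
    have : p.natDegree ≤ 2 * m := by
      rw [hp]
      apply Polynomial.natDegree_sum_le_of_forall_le
      intro k _
      refine (natDegree_C_mul_le _ _).trans ?_
      refine (cheb_natDegree_le _).trans ?_
      have := k.2
      omega
    simp only [Fintype.card_sum, Fintype.card_fin, Fintype.card_unit]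
    omega
  have hp0 : p = 0 := Polynomial.eq_zero_of_natDegree_lt_card_of_eval_eq_zero p hfinj hfeval hdeg
  -- extract coefficients
  have hvz : ∀ k, v k = 0 := by
    by_contra hcon
    push_neg at hcon
    obtain ⟨k1, hk1⟩ := hcon
    set F : Finset (Fin m) := Finset.univ.filter (fun k => v k ≠ 0) with hF
    have hFne : F.Nonempty := ⟨k1, by simp [hF, hk1]⟩
    set k₀ := F.max' hFne with hk₀
    have hk₀F : k₀ ∈ F := F.max'_mem hFne
    have hk₀ne : v k₀ ≠ 0 := by simpa [hF] using hk₀F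
    have hmax : ∀ k, v k ≠ 0 → k ≤ k₀ := fun k hk => F.le_max' k (by simp [hF, hk])
    have hcoeff : p.coeff (2 * (k₀ : ℕ) + 1) = v k₀ * 2 ^ (2 * (k₀ : ℕ)) := by
      rw [hp, Polynomial.finset_sum_coeff]
      rw [Finset.sum_eq_single k₀]
      · rw [coeff_C_mul]
        rw [show ((2 * (k₀ : ℕ) + 1 : ℕ) : ℤ) = ((2 * (k₀ : ℕ) + 1 : ℕ) : ℤ) from rfl]
        rw [show (2 * (k₀ : ℕ) + 1 : ℕ) = (2 * (k₀ : ℕ)) + 1 from rfl]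
        rw [cheb_coeff_top (2 * (k₀ : ℕ))]
      · intro k _ hkne
        by_cases hvk : v k = 0
        · rw [coeff_C_mul, hvk, zero_mul]
        · have hkle : k ≤ k₀ := hmax k hvk
          have hklt : (k : ℕ) < (k₀ : ℕ) := by
            rcases lt_or_eq_of_le hkle with h | h
            · exact h
            · exact absurd h hkne
          rw [coeff_C_mul, coeff_eq_zero_of_natDegree_lt, mul_zero]
          exact lt_of_le_of_lt (cheb_natDegree_le _) (by omega)
      · intro h
        exact absurd (Finset.mem_univ k₀) h
    rw [hp0, Polynomial.coeff_zero] at hcoeff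
    have : v k₀ = 0 := by
      have h2 : (0:ℝ) < 2 ^ (2 * (k₀ : ℕ)) := by positivity
      nlinarith [hcoeff]
    exact hk₀ne this
  exact hv0 (funext fun k => hvz k)
end
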